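/- arXiv:1108.3381 — 15 statements merged into one kernel-verified Lean document; each statement's English description precedes it below -/
import Mathlib

section
/- Let M and N be left R-modules, K a submodule of M that is PSD in M, and f: M → N a surjective R-module homomorphism. Then f(K) is PSD in N. -/
open Submodule Function

/-- A submodule `N` of `M` is PSD in `M` if whenever `N + X = M`, there is a
projective direct summand `S` of `M` with `S ≤ N` and `M = S ⊕ X`. -/
def IsPSD (R : Type*) [Ring R] {M : Type*} [AddCommGroup M] [Module R M]
    (N : Submodule R M) : Prop :=
  ∀ X : Submodule R M, N ⊔ X = ⊤ →
    ∃ S : Submodule R M, S ≤ N ∧ Module.Projective R ↥S ∧ IsCompl S X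

/-- `N` is small in `M`: `N + L = M` implies `L = M`. -/
def IsSmallSub (R : Type*) [Ring R] {M : Type*} [AddCommGroup M] [Module R M]
    (N : Submodule R M) : Prop :=
  ∀ L : Submodule R M, N ⊔ L = ⊤ → L = ⊤

/-- The (Jacobson) radical of a module: intersection of all maximal submodules. -/
def radM (R M : Type*) [Ring R] [AddCommGroup M] [Module R M] : Submodule R M :=
  sInf {m : Submodule R M | IsCoatom m}

/-- `M` is supplemented: every submodule `X` has a submodule `Y` with `X + Y = M`
and `X ∩ Y` small in `Y`. -/
def IsSupplemented (R M : Type*) [Ring R] [AddCommGroup M] [Module R M] : Prop :=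
  ∀ X : Submodule R M, ∃ Y : Submodule R M, X ⊔ Y = ⊤ ∧
    IsSmallSub R (Submodule.comap Y.subtype X)

/-- `M` is lifting: every submodule `N` admits a decomposition `M = A ⊕ B` with
`A ≤ N` and `N ∩ B` small in `B`. -/
def IsLifting (R M : Type*) [Ring R] [AddCommGroup M] [Module R M] : Prop :=
  ∀ N : Submodule R M, ∃ A B : Submodule R M, IsCompl A B ∧ A ≤ N ∧
    IsSmallSub R (Submodule.comap B.subtype N)

/-- `Y` is an `I`-supplement of `X` in `M`: `X + Y = M`, `X ∩ Y ⊆ IY`, and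
`X ∩ Y` is PSD in `Y`. -/
def IsISupplementOf {R : Type*} [Ring R] {M : Type*} [AddCommGroup M] [Module R M]
    (I : Ideal R) (Y X : Submodule R M) : Prop :=
  X ⊔ Y = ⊤ ∧ X ⊓ Y ≤ I • Y ∧ IsPSD R (Submodule.comap Y.subtype X)

/-- `M` is `I`-supplemented: every submodule has an `I`-supplement in `M`. -/
def IsISupplemented {R : Type*} [Ring R] (I : Ideal R) (M : Type*)
    [AddCommGroup M] [Module R M] : Prop :=
  ∀ X : Submodule R M, ∃ Y : Submodule R M, IsISupplementOf I Y X

theorem stmt0 {R M N : Type*} [Ring R] [AddCommGroup M] [Module R M]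
    [AddCommGroup N] [Module R N] (K : Submodule R M) (hK : IsPSD R K)
    (f : M →ₗ[R] N) (hf : Surjective f) : IsPSD R (K.map f) := by
  intro X hX
  -- Pull back: K ⊔ comap f X = ⊤
  have hpull : K ⊔ X.comap f = ⊤ := by
    rw [eq_top_iff]
    intro m _
    have hm : f m ∈ K.map f ⊔ X := hX ▸ Submodule.mem_top
    rcases Submodule.mem_sup.mp hm with ⟨y, hy, x, hx, hyx⟩
    rcases hy with ⟨k, hk, rfl⟩
    refine Submodule.mem_sup.mpr ⟨k, hk, m - k, ?_, by abel⟩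
    simp only [Submodule.mem_comap, map_sub]
    rw [show f m - f k = x by rw [← hyx]; abel]
    exact hx
  obtain ⟨S, hSK, hSproj, hScompl⟩ := hK (X.comap f) hpull
  refine ⟨S.map f, Submodule.map_mono hSK, ?_, ?_⟩
  · -- projectivity: f restricted to S is injective
    have hginj : Injective (f.comp S.subtype) := by
      intro a b hab
      have : ((a : M) - b) ∈ S ⊓ X.comap f := by
        refine Submodule.mem_inf.mpr ⟨S.sub_mem a.2 b.2, ?_⟩
        have hab' : f (a : M) = f (b : M) := hab
        rw [Submodule.mem_comap, map_sub, hab', sub_self]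
        exact X.zero_mem
      rw [hScompl.disjoint.eq_bot] at this
      exact Subtype.ext (by simpa [sub_eq_zero] using this)
    have hrange : LinearMap.range (f.comp S.subtype) = S.map f := by
      rw [LinearMap.range_comp, Submodule.range_subtype]
    have e := LinearEquiv.ofInjective (f.comp S.subtype) hginj
    rw [hrange] at e
    exact Module.Projective.of_equiv e
  · constructor
    · rw [disjoint_iff, eq_bot_iff]
      rintro n ⟨⟨s, hs, rfl⟩, hnX⟩
      have : s ∈ S ⊓ X.comap f := ⟨hs, hnX⟩
      rw [hScompl.disjoint.eq_bot] at this
      have : s = 0 := by simpa using this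
      simp [this]
    · rw [codisjoint_iff]
      have : Submodule.map f (S ⊔ X.comap f) = ⊤ := by
        rw [hScompl.sup_eq_top, Submodule.map_top, LinearMap.range_eq_top.mpr hf]
      rwa [Submodule.map_sup, Submodule.map_comap_eq_of_surjective hf] at this
end

section
/- Let L ≤ N ≤ M be left R-modules. If L is PSD in N, then L is PSD in M. -/
open Submodule Function

theorem stmt1 {R M : Type*} [Ring R] [AddCommGroup M] [Module R M]
    (L N : Submodule R M) (hLN : L ≤ N)
    (h : IsPSD R (Submodule.comap N.subtype L)) : IsPSD R L := by
  intro X hX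
  have hinj : Function.Injective N.subtype := Subtype.val_injective
  have hsup : Submodule.comap N.subtype L ⊔ Submodule.comap N.subtype X = ⊤ := by
    apply Submodule.map_injective_of_injective hinj
    rw [Submodule.map_sup, Submodule.map_comap_subtype, Submodule.map_comap_subtype,
      Submodule.map_top, Submodule.range_subtype, inf_of_le_right hLN, inf_comm N X,
      ← sup_inf_assoc_of_le _ hLN, hX, top_inf_eq]
  obtain ⟨S', hS'le, hS'proj, hS'compl⟩ := h _ hsup
  refine ⟨Submodule.map N.subtype S', ?_, ?_, ?_, ?_⟩
  · calc Submodule.map N.subtype S' ≤ Submodule.map N.subtype (Submodule.comap N.subtype L) :=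
          Submodule.map_mono hS'le
      _ ≤ L := by rw [Submodule.map_comap_subtype]; exact inf_le_right
  · exact Module.Projective.of_equiv (Submodule.equivMapOfInjective N.subtype hinj S')
  · rw [disjoint_iff, eq_bot_iff]
    intro x hx
    have hxN : x ∈ N := by
      have := hx.1
      obtain ⟨y, hy, rfl⟩ := this
      exact y.2
    have : (⟨x, hxN⟩ : N) ∈ S' ⊓ Submodule.comap N.subtype X := by
      constructor
      · obtain ⟨y, hy, hyx⟩ := hx.1
        have : y = ⟨x, hxN⟩ := Subtype.ext hyx
        rwa [this] at hy
      · exact hx.2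
    rw [disjoint_iff.mp hS'compl.disjoint] at this
    simpa using congrArg Subtype.val this
  · rw [codisjoint_iff, eq_top_iff]
    have hN : N ≤ Submodule.map N.subtype S' ⊔ X := by
      have := congrArg (Submodule.map N.subtype) (codisjoint_iff.mp hS'compl.codisjoint)
      rw [Submodule.map_sup, Submodule.map_comap_subtype, Submodule.map_top,
        Submodule.range_subtype] at this
      calc N = Submodule.map N.subtype S' ⊔ N ⊓ X := this.symm
        _ ≤ Submodule.map N.subtype S' ⊔ X := sup_le_sup_left inf_le_right _
    calc (⊤ : Submodule R M) = L ⊔ X := hX.symm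
      _ ≤ Submodule.map N.subtype S' ⊔ X := sup_le (le_trans hLN hN) le_sup_right
end

section
/- Let L ≤ N ≤ M be left R-modules. If N is PSD in M, then L is PSD in M. -/
open Submodule Function

/-! If `L + X = M` then `N + X = M`, so `M = S ⊕ X` with `S ≤ N` projective. The projection
`M → S` along `X` is still surjective on `L`, so projectivity of `S` gives a section `S → L`;
its image is a copy of `S` inside `L`, and it is again a complement of `X`. -/

namespace LinearMap

variable {R M P : Type*} [Ring R] [AddCommGroup M] [Module R M] [AddCommGroup P] [Module R P]

theorem isCompl_range_ker_of_comp_eq_id {f : M →ₗ[R] P} {g : P →ₗ[R] M} (hfg : f ∘ₗ g = id) :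
    IsCompl (range g) (ker f) := by
  have hidem : IsIdempotentElem (g ∘ₗ f) := by
    change g ∘ₗ (f ∘ₗ g) ∘ₗ f = g ∘ₗ f
    rw [hfg, id_comp]
  rw [← range_comp_of_range_eq_top g (range_eq_top.2 (surjective_of_comp_eq_id g f hfg)),
    ← ker_comp_of_ker_eq_bot f (ker_eq_bot.2 (injective_of_comp_eq_id g f hfg))]
  exact IsIdempotentElem.isCompl hidem

end LinearMap

namespace Submodule

variable {R M : Type*} [Ring R] [AddCommGroup M] [Module R M]

theorem surjective_projectionOnto_comp_subtype {S X L : Submodule R M} (hSX : IsCompl S X)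
    (hLX : L ⊔ X = ⊤) : Function.Surjective (S.projectionOnto X hSX ∘ₗ L.subtype) := by
  rw [← LinearMap.range_eq_top, LinearMap.range_comp, range_subtype,
    LinearMap.map_eq_top_iff (range_projectionOnto hSX), ker_projectionOnto]
  exact hLX

theorem exists_projective_isCompl_le_of_sup_eq_top {S X L : Submodule R M} (hSX : IsCompl S X)
    [Module.Projective R S] (hLX : L ⊔ X = ⊤) :
    ∃ T : Submodule R M, T ≤ L ∧ Module.Projective R T ∧ IsCompl T X := by
  obtain ⟨s, hs⟩ := Module.projective_lifting_property _ LinearMap.id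
    (surjective_projectionOnto_comp_subtype hSX hLX)
  rw [LinearMap.comp_assoc] at hs
  refine ⟨LinearMap.range (L.subtype ∘ₗ s), ?_, ?_, ?_⟩
  · exact (LinearMap.range_comp_le_range s L.subtype).trans_eq L.range_subtype
  · exact .of_equiv (LinearEquiv.ofInjective _ (LinearMap.injective_of_comp_eq_id _ _ hs))
  · simpa only [ker_projectionOnto] using LinearMap.isCompl_range_ker_of_comp_eq_id hs

end Submodule

theorem stmt2 {R M : Type*} [Ring R] [AddCommGroup M] [Module R M]
    (L N : Submodule R M) (hLN : L ≤ N) (h : IsPSD R N) : IsPSD R L := by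
  intro X hLX
  obtain ⟨S, -, hS, hSX⟩ := h X (top_le_iff.1 (hLX ▸ sup_le_sup_right hLN X))
  exact exists_projective_isCompl_le_of_sup_eq_top hSX hLX
end

section
/- Let M = M₁ ⊕ M₂ be a direct sum of left R-modules. If N₁ is PSD in M₁ and N₂ is PSD in M₂, then N₁ ⊕ N₂ is PSD in M. -/
open Submodule Function

open Submodule Function

lemma projective_sup {R M : Type*} [Ring R] [AddCommGroup M] [Module R M]
    (p q : Submodule R M) (h : Disjoint p q)
    (hp : Module.Projective R ↥p) (hq : Module.Projective R ↥q) :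
    Module.Projective R ↥(p ⊔ q) := by
  have hple : p ≤ p ⊔ q := le_sup_left
  have hqle : q ≤ p ⊔ q := le_sup_right
  have hcompl : IsCompl (comap (p ⊔ q).subtype p) (comap (p ⊔ q).subtype q) := by
    constructor
    · rw [disjoint_iff, eq_bot_iff]
      rintro ⟨x, hx⟩ ⟨hxp, hxq⟩
      have : x = 0 := (Submodule.disjoint_def.mp h) x hxp hxq
      simpa [Submodule.mem_bot] using this
    · rw [codisjoint_iff, eq_top_iff]
      rintro ⟨x, hx⟩ -
      obtain ⟨a, ha, b, hb, rfl⟩ := Submodule.mem_sup.mp hx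
      refine Submodule.mem_sup.mpr ⟨⟨a, hple ha⟩, ha, ⟨b, hqle hb⟩, hb, rfl⟩
  have e : (↥(comap (p ⊔ q).subtype p) × ↥(comap (p ⊔ q).subtype q)) ≃ₗ[R] ↥(p ⊔ q) :=
    Submodule.prodEquivOfIsCompl _ _ hcompl
  have ep : ↥(comap (p ⊔ q).subtype p) ≃ₗ[R] ↥p := Submodule.comapSubtypeEquivOfLe hple
  have eq' : ↥(comap (p ⊔ q).subtype q) ≃ₗ[R] ↥q := Submodule.comapSubtypeEquivOfLe hqle
  have hp' : Module.Projective R ↥(comap (p ⊔ q).subtype p) :=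
    Module.Projective.of_equiv ep.symm
  have hq' : Module.Projective R ↥(comap (p ⊔ q).subtype q) :=
    Module.Projective.of_equiv eq'.symm
  exact Module.Projective.of_equiv e

lemma psd_step {R M : Type*} [Ring R] [AddCommGroup M] [Module R M]
    (P N X : Submodule R M) (hNP : N ≤ P)
    (hPSD : IsPSD R (Submodule.comap P.subtype N)) (hsup : N ⊔ X = ⊤) :
    ∃ S, S ≤ N ∧ Module.Projective R ↥S ∧ IsCompl S X := by
  have hY : Submodule.comap P.subtype N ⊔ Submodule.comap P.subtype X = ⊤ := by
    rw [eq_top_iff]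
    rintro ⟨p, hp⟩ -
    have hpNX : p ∈ N ⊔ X := hsup ▸ Submodule.mem_top
    obtain ⟨n, hn, x, hx, hnx⟩ := Submodule.mem_sup.mp hpNX
    have hnP : n ∈ P := hNP hn
    have hxP : x ∈ P := by
      have := Submodule.sub_mem P hp hnP
      rw [← hnx] at this; simpa using this
    refine Submodule.mem_sup.mpr ⟨⟨n, hnP⟩, hn, ⟨x, hxP⟩, hx, ?_⟩
    ext; simpa using hnx
  obtain ⟨S', hS'N, hproj, hcompl⟩ := hPSD _ hY
  refine ⟨S'.map P.subtype, Submodule.map_le_iff_le_comap.mpr hS'N,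
    Module.Projective.of_equiv (Submodule.equivMapOfInjective P.subtype
      P.injective_subtype S'), ?_, ?_⟩
  · rw [disjoint_iff, eq_bot_iff]
    rintro s ⟨hsS, hsX⟩
    obtain ⟨⟨s', hs'P⟩, hs'S, rfl⟩ := hsS
    have : (⟨s', hs'P⟩ : ↥P) ∈ S' ⊓ Submodule.comap P.subtype X :=
      ⟨hs'S, hsX⟩
    rw [hcompl.inf_eq_bot] at this
    simpa using congrArg (Subtype.val) this
  · rw [codisjoint_iff, eq_top_iff]
    have hPle : P ≤ S'.map P.subtype ⊔ X := by
      have : P = (S' ⊔ Submodule.comap P.subtype X).map P.subtype := by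
        rw [hcompl.sup_eq_top, Submodule.map_top, Submodule.range_subtype]
      conv_lhs => rw [this]
      rw [Submodule.map_sup, Submodule.map_comap_subtype]
      exact sup_le_sup_left inf_le_right _
    calc ⊤ = N ⊔ X := hsup.symm
      _ ≤ (S'.map P.subtype ⊔ X) ⊔ X := sup_le_sup_right (hNP.trans hPle) X
      _ = S'.map P.subtype ⊔ X := by rw [sup_assoc, sup_idem]


theorem stmt3 {R M : Type*} [Ring R] [AddCommGroup M] [Module R M]
    (M1 M2 N1 N2 : Submodule R M) (hM : IsCompl M1 M2)
    (hN1 : N1 ≤ M1) (hN2 : N2 ≤ M2)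
    (h1 : IsPSD R (Submodule.comap M1.subtype N1))
    (h2 : IsPSD R (Submodule.comap M2.subtype N2)) :
    IsPSD R (N1 ⊔ N2) := by
  intro X hX
  have hsup1 : N1 ⊔ (N2 ⊔ X) = ⊤ := by rw [← sup_assoc]; exact hX
  obtain ⟨S1, hS1N, hS1proj, hS1compl⟩ := psd_step M1 N1 (N2 ⊔ X) hN1 h1 hsup1
  have hsup2 : N2 ⊔ (S1 ⊔ X) = ⊤ := by
    have h := hS1compl.sup_eq_top
    rw [← h]
    ac_rfl
  obtain ⟨S2, hS2N, hS2proj, hS2compl⟩ := psd_step M2 N2 (S1 ⊔ X) hN2 h2 hsup2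
  refine ⟨S1 ⊔ S2, sup_le_sup hS1N hS2N,
    projective_sup _ _ (hM.disjoint.mono (hS1N.trans hN1) (hS2N.trans hN2))
      hS1proj hS2proj, ?_, ?_⟩
  · rw [disjoint_iff, eq_bot_iff]
    rintro m ⟨hmS, hmX⟩
    obtain ⟨s1, hs1, s2, hs2, rfl⟩ := Submodule.mem_sup.mp hmS
    have hs2' : s2 ∈ S1 ⊔ X := by
      have he : s2 = (s1 + s2) - s1 := by abel
      rw [he]
      exact Submodule.sub_mem _ (Submodule.mem_sup_right hmX)
        (Submodule.mem_sup_left hs1)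
    have hz : s2 = 0 := Submodule.disjoint_def.mp hS2compl.disjoint s2 hs2 hs2'
    rw [hz, add_zero] at hmX ⊢
    have hs1' : s1 ∈ N2 ⊔ X := Submodule.mem_sup_right hmX
    have : s1 = 0 := Submodule.disjoint_def.mp hS1compl.disjoint s1 hs1 hs1'
    simp [this]
  · rw [codisjoint_iff]
    have h := hS2compl.sup_eq_top
    rw [← h]
    ac_rfl
end

section
/- Let N be a direct summand of a left R-module M and A ≤ N. Then A is PSD in M if and only if A is PSD in N. -/
open Submodule Function

section Aux
variable {R M : Type*} [Ring R] [AddCommGroup M] [Module R M]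

lemma map_inj (N : Submodule R M) : Injective (Submodule.map N.subtype) :=
  Submodule.map_injective_of_injective N.injective_subtype

lemma compl_iff_aux (N : Submodule R M) (a b : Submodule R ↥N) :
    IsCompl a b ↔ (map N.subtype a ⊓ map N.subtype b = ⊥ ∧
      map N.subtype a ⊔ map N.subtype b = N) := by
  rw [isCompl_iff, disjoint_iff, codisjoint_iff,
    ← Submodule.map_inf _ N.injective_subtype, ← Submodule.map_sup]
  constructor
  · rintro ⟨h1, h2⟩
    rw [h1, h2]
    exact ⟨Submodule.map_bot _, Submodule.map_subtype_top N⟩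
  · rintro ⟨h1, h2⟩
    constructor
    · apply map_inj N; rw [h1, Submodule.map_bot]
    · apply map_inj N; rw [h2, Submodule.map_subtype_top]

lemma proj_of_le {N S : Submodule R M} (h : S ≤ N) [Module.Projective R ↥S] :
    Module.Projective R ↥(comap N.subtype S) := by
  have e1 := Submodule.equivMapOfInjective N.subtype N.injective_subtype (comap N.subtype S)
  have heq : map N.subtype (comap N.subtype S) = S := by
    rw [Submodule.map_comap_subtype, inf_eq_right.mpr h]
  exact Module.Projective.of_equiv (M := ↥S) (e1.trans (LinearEquiv.ofEq _ _ heq)).symm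

end Aux


theorem stmt4 {R M : Type*} [Ring R] [AddCommGroup M] [Module R M]
    (N A : Submodule R M) (hN : ∃ N' : Submodule R M, IsCompl N N')
    (hA : A ≤ N) :
    IsPSD R A ↔ IsPSD R (Submodule.comap N.subtype A) := by
  
  obtain ⟨N', hNN'⟩ := hN
  have hmapA : map N.subtype (comap N.subtype A) = A := by
    rw [Submodule.map_comap_subtype, inf_eq_right.mpr hA]
  constructor
  · intro h X hX
    -- map everything to M
    have hXN : map N.subtype X ≤ N := map_subtype_le N X
    have h1 : A ⊔ map N.subtype X = N := by
      have := congrArg (map N.subtype) hX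
      rwa [Submodule.map_sup, hmapA, Submodule.map_subtype_top] at this
    have h2 : A ⊔ (map N.subtype X ⊔ N') = ⊤ := by
      rw [← sup_assoc, h1, codisjoint_iff.mp hNN'.codisjoint]
    obtain ⟨S, hSA, hSproj, hScompl⟩ := h _ h2
    have hSN : S ≤ N := hSA.trans hA
    have hmapS : map N.subtype (comap N.subtype S) = S := by
      rw [Submodule.map_comap_subtype, inf_eq_right.mpr hSN]
    refine ⟨comap N.subtype S, comap_mono hSA, proj_of_le hSN, ?_⟩
    rw [compl_iff_aux, hmapS]
    constructor
    · refine le_bot_iff.mp ?_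
      calc S ⊓ map N.subtype X ≤ S ⊓ (map N.subtype X ⊔ N') :=
            inf_le_inf_left _ le_sup_left
        _ = ⊥ := disjoint_iff.mp hScompl.disjoint
    · have htop : S ⊔ map N.subtype X ⊔ N' = ⊤ := by
        rw [sup_assoc]; exact codisjoint_iff.mp hScompl.codisjoint
      have hle : S ⊔ map N.subtype X ≤ N := sup_le hSN hXN
      have := sup_inf_assoc_of_le (z := N) N' hle
      rw [htop, top_inf_eq, disjoint_iff.mp hNN'.disjoint.symm, sup_bot_eq] at this
      exact this.symm
  · intro h X hX
    set X' := comap N.subtype (N ⊓ X) with hX'def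
    have hmapX' : map N.subtype X' = N ⊓ X := by
      rw [hX'def, Submodule.map_comap_subtype, inf_eq_right.mpr inf_le_left]
    have h1 : comap N.subtype A ⊔ X' = ⊤ := by
      apply map_inj N
      rw [Submodule.map_sup, hmapA, hmapX', Submodule.map_subtype_top]
      rw [sup_comm, inf_sup_assoc_of_le _ hA, sup_comm X A, hX, inf_top_eq]
    obtain ⟨S', hS'A, hS'proj, hS'compl⟩ := h _ h1
    rw [compl_iff_aux, hmapX'] at hS'compl
    refine ⟨map N.subtype S', ?_, ?_, ?_⟩
    · have := map_mono (f := N.subtype) hS'A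
      rwa [hmapA] at this
    · exact Module.Projective.of_equiv
        (Submodule.equivMapOfInjective N.subtype N.injective_subtype S')
    · have hSN : map N.subtype S' ≤ N := map_subtype_le N S'
      rw [isCompl_iff, disjoint_iff, codisjoint_iff]
      constructor
      · refine le_bot_iff.mp ?_
        calc map N.subtype S' ⊓ X ≤ map N.subtype S' ⊓ (N ⊓ X) :=
              le_inf inf_le_left (le_inf (inf_le_left.trans hSN) inf_le_right)
          _ = ⊥ := hS'compl.1
      · have h2 : map N.subtype S' ⊔ X = N ⊔ X := by
          calc map N.subtype S' ⊔ X
              = map N.subtype S' ⊔ (N ⊓ X ⊔ X) := by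
                rw [sup_eq_right.mpr (inf_le_right : N ⊓ X ≤ X)]
            _ = (map N.subtype S' ⊔ N ⊓ X) ⊔ X := by rw [sup_assoc]
            _ = N ⊔ X := by rw [hS'compl.2]
        rw [h2]
        exact eq_top_iff.mpr (hX ▸ sup_le_sup_right hA X)
end

section
/- A submodule N of a left R-module M is small in M (i.e., N + L = M implies L = M for submodules L) if and only if N ⊆ Rad(M) and N is PSD in M. -/
open Submodule Function

section Aux
variable {R : Type*} [Ring R]

lemma radM_le_coatom {M : Type*} [AddCommGroup M] [Module R M] {m : Submodule R M}
    (h : IsCoatom m) : radM R M ≤ m := sInf_le h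

lemma exists_left_inv {x : R} (hx : x ∈ radM R R) : ∃ w : R, w * (1 - x) = 1 := by
  by_contra hcon
  push_neg at hcon
  have hne : Submodule.span R {1 - x} ≠ (⊤ : Ideal R) := by
    intro h
    have h1 : (1 : R) ∈ Submodule.span R ({1 - x} : Set R) := by rw [h]; trivial
    obtain ⟨a, ha⟩ := Submodule.mem_span_singleton.mp h1
    exact hcon a ha
  obtain ⟨𝔪, hmax, hle⟩ := Ideal.exists_le_maximal _ hne
  have hco : IsCoatom 𝔪 := Ideal.isMaximal_def.mp hmax
  have h1x : (1 - x) ∈ 𝔪 := hle (Submodule.mem_span_singleton_self _)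
  have hx𝔪 : x ∈ 𝔪 := radM_le_coatom hco hx
  have : (1 : R) ∈ 𝔪 := by
    have := 𝔪.add_mem h1x hx𝔪; simpa using this
  exact hco.1 ((Ideal.eq_top_iff_one 𝔪).mpr this)

lemma unit_of_mem_radM {x : R} (hx : x ∈ radM R R) :
    ∃ w : R, w * (1 - x) = 1 ∧ (1 - x) * w = 1 := by
  obtain ⟨w, hw⟩ := exists_left_inv hx
  have hz : -(w * x) ∈ radM R R := neg_mem ((radM R R).smul_mem w hx)
  obtain ⟨v, hv⟩ := exists_left_inv hz
  have hwz : 1 - -(w * x) = w := by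
    have h1 : w - w * x = 1 := by rw [← mul_one_sub]; exact hw
    have : w = 1 + w * x := by linear_combination (norm := noncomm_ring) h1
    linear_combination (norm := noncomm_ring) this.symm
  rw [hwz] at hv
  have hveq : v = 1 - x := by
    calc v = v * (w * (1 - x)) := by rw [hw, mul_one]
    _ = (v * w) * (1 - x) := by rw [mul_assoc]
    _ = 1 - x := by rw [hv, one_mul]
  exact ⟨w, hw, by rw [← hveq]; exact hv⟩

lemma rowNak {ι : Type*} [DecidableEq ι] (t : Finset ι) :
    ∀ (a : ι → R) (c : ι → ι → R), (∀ x ∈ t, ∀ y ∈ t, c x y ∈ radM R R) →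
    (∀ y ∈ t, a y = ∑ x ∈ t, a x * c x y) → ∀ y ∈ t, a y = 0 := by
  induction t using Finset.induction with
  | empty => intro a c _ _ y hy; exact absurd hy (Finset.notMem_empty y)
  | @insert x₀ t' hx ih =>
    intro a c hc hrel
    have hx₀ : x₀ ∈ insert x₀ t' := Finset.mem_insert_self _ _
    have hc00 : c x₀ x₀ ∈ radM R R := hc _ hx₀ _ hx₀
    obtain ⟨u, hu1, hu2⟩ := unit_of_mem_radM hc00
    have h0 : a x₀ = a x₀ * c x₀ x₀ + ∑ x ∈ t', a x * c x x₀ := by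
      have h0' := hrel x₀ hx₀
      rwa [Finset.sum_insert hx] at h0'
    have h1 : a x₀ * (1 - c x₀ x₀) = ∑ x ∈ t', a x * c x x₀ := by
      rw [mul_one_sub]; linear_combination (norm := noncomm_ring) h0
    have h2 : a x₀ = (∑ x ∈ t', a x * c x x₀) * u := by
      calc a x₀ = a x₀ * ((1 - c x₀ x₀) * u) := by rw [hu2, mul_one]
      _ = (a x₀ * (1 - c x₀ x₀)) * u := by rw [mul_assoc]
      _ = _ := by rw [h1]
    have key : ∀ y ∈ t', a y = ∑ x ∈ t', a x * (c x y + c x x₀ * u * c x₀ y) := by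
      intro y hy
      have hyi : y ∈ insert x₀ t' := Finset.mem_insert_of_mem hy
      have hy' := hrel y hyi
      rw [Finset.sum_insert hx, h2, Finset.sum_mul, Finset.sum_mul] at hy'
      rw [hy', ← Finset.sum_add_distrib]
      apply Finset.sum_congr rfl
      intro x _
      noncomm_ring
    have ht' : ∀ y ∈ t', a y = 0 := by
      apply ih a (fun x y => c x y + c x x₀ * u * c x₀ y)
      · intro x hxt y hyt
        refine add_mem (hc _ (Finset.mem_insert_of_mem hxt) _ (Finset.mem_insert_of_mem hyt)) ?_
        exact (radM R R).smul_mem (c x x₀ * u) (hc _ hx₀ _ (Finset.mem_insert_of_mem hyt))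
      · exact key
    intro y hy
    rcases Finset.mem_insert.mp hy with rfl | hy'
    · rw [h2, Finset.sum_congr rfl (fun x hxt => by rw [ht' x hxt, zero_mul]),
        Finset.sum_const_zero, zero_mul]
    · exact ht' y hy'

lemma proj_triv {P : Type*} [AddCommGroup P] [Module R P]
    (hp : Module.Projective R P)
    (hf : ∀ f : P →ₗ[R] R, ∀ q : P, f q ∈ radM R R) : ∀ p : P, p = 0 := by
  classical
  obtain ⟨s, hs⟩ := Module.projective_def.mp hp
  intro p
  have hrep : p = ∑ x ∈ (s p).support, s p x • x := by
    conv_lhs => rw [← hs p]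
    rw [Finsupp.linearCombination_apply, Finsupp.sum]
    simp
  have key : ∀ y : P, s p y = ∑ x ∈ (s p).support, s p x * s x y := by
    intro y
    set g : P →ₗ[R] R := (Finsupp.lapply y).comp s with hg
    have h1 : g p = ∑ x ∈ (s p).support, s p x • g x := by
      conv_lhs => rw [hrep]
      rw [map_sum]
      exact Finset.sum_congr rfl fun x _ => g.map_smul _ _
    simpa [hg, Finsupp.lapply, smul_eq_mul] using h1
  have hzero : ∀ y ∈ (s p).support, s p y = 0 := by
    apply rowNak (s p).support (fun x => s p x) (fun x y => s x y)
    · intro x _ y _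
      exact hf ((Finsupp.lapply y).comp s) x
    · intro y _; exact key y
  have hsp : s p = 0 := by
    ext y
    by_cases hy : y ∈ (s p).support
    · exact hzero y hy
    · exact Finsupp.notMem_support_iff.mp hy
  rw [← hs p, hsp, map_zero]

lemma isCoatom_comap {P Q : Type*} [AddCommGroup P] [Module R P]
    [AddCommGroup Q] [Module R Q] (f : P →ₗ[R] Q) {m : Submodule R Q}
    (hm : IsCoatom m) (hr : ¬ LinearMap.range f ≤ m) :
    IsCoatom (Submodule.comap f m) := by
  constructor
  · intro h
    apply hr
    rintro q ⟨x, rfl⟩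
    have : x ∈ Submodule.comap f m := by rw [h]; trivial
    exact this
  · intro X hX
    have h1 : ¬ Submodule.map f X ≤ m := by
      intro h
      exact hX.ne (le_antisymm hX.le (fun x hx => h (Submodule.mem_map_of_mem hx)))
    have h2 : m ⊔ Submodule.map f X = ⊤ := by
      apply hm.2
      rcases lt_or_eq_of_le (le_sup_left : m ≤ m ⊔ Submodule.map f X) with h | h
      · exact h
      · exact absurd (sup_eq_left.mp h.symm) h1
    rw [eq_top_iff]
    intro p _
    have hfp : f p ∈ m ⊔ Submodule.map f X := h2 ▸ Submodule.mem_top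
    obtain ⟨y, hy, z, hz, hyz⟩ := Submodule.mem_sup.mp hfp
    obtain ⟨x, hxX, rfl⟩ := hz
    have hpx : p - x ∈ Submodule.comap f m := by
      simp only [Submodule.mem_comap, map_sub]
      have : f p - f x = y := by rw [← hyz]; abel
      rw [this]; exact hy
    have : p - x ∈ X := hX.le hpx
    simpa using X.add_mem this hxX

lemma no_coatom_of_summand_le_rad {M : Type*} [AddCommGroup M] [Module R M]
    {S L : Submodule R M} (hc : IsCompl S L) (hS : S ≤ radM R M)
    (m : Submodule R ↥S) : ¬ IsCoatom m := by
  intro hm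
  have hinj : Function.Injective S.subtype := Subtype.val_injective
  set m' : Submodule R M := Submodule.map S.subtype m with hm'def
  have hm'S : m' ≤ S := by
    rintro x ⟨y, _, rfl⟩; exact y.2
  have hLS : L ⊓ S = ⊥ := by rw [inf_comm]; exact hc.inf_eq_bot
  have hkey : (m' ⊔ L) ⊓ S = m' := by
    rw [sup_inf_assoc_of_le L hm'S, hLS, sup_bot_eq]
  have meqtop : S ≤ m' ⊔ L → False := by
    intro hSle
    have hSm : S = m' := by
      rw [← hkey]
      exact le_antisymm (le_inf hSle le_rfl) inf_le_right
    have : m = ⊤ := by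
      apply Submodule.map_injective_of_injective hinj
      rw [Submodule.map_top, Submodule.range_subtype, ← hm'def, ← hSm]
    exact hm.1 this
  have hKco : IsCoatom (m' ⊔ L) := by
    constructor
    · intro h
      exact meqtop (h ▸ le_top)
    · intro X hX
      have hLX : L ≤ X := le_trans le_sup_right hX.le
      have hm'X : m' ≤ X ⊓ S := le_inf (le_trans le_sup_left hX.le) hm'S
      have hlt : m' < X ⊓ S := by
        rcases lt_or_eq_of_le hm'X with h | h
        · exact h
        · exfalso
          apply hX.ne'
          calc X = X ⊓ (S ⊔ L) := by rw [hc.sup_eq_top, inf_top_eq]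
          _ = (X ⊓ S) ⊔ L := (inf_sup_assoc_of_le S hLX).symm
          _ = m' ⊔ L := by rw [← h]
      have hcm : m < Submodule.comap S.subtype (X ⊓ S) := by
        have hmc : m = Submodule.comap S.subtype m' :=
          (Submodule.comap_map_eq_of_injective hinj m).symm
        rcases lt_or_eq_of_le (hmc ▸ Submodule.comap_mono hlt.le) with h | h
        · exact h
        · exfalso
          apply hlt.ne
          have h1 : Submodule.map S.subtype (Submodule.comap S.subtype (X ⊓ S)) = X ⊓ S := by
            rw [Submodule.map_comap_eq, Submodule.range_subtype]
            exact inf_eq_right.mpr inf_le_right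
          rw [hm'def, h, h1]
      have htop := hm.2 _ hcm
      have hSX : S ≤ X := by
        have h1 : Submodule.map S.subtype (Submodule.comap S.subtype (X ⊓ S)) = X ⊓ S := by
          rw [Submodule.map_comap_eq, Submodule.range_subtype]
          exact inf_eq_right.mpr inf_le_right
        rw [htop, Submodule.map_top, Submodule.range_subtype] at h1
        exact le_trans (le_of_eq h1) inf_le_left
      rw [eq_top_iff, ← hc.sup_eq_top]
      exact sup_le hSX hLX
  exact meqtop (le_trans hS (radM_le_coatom hKco))

end Aux

theorem stmt5 {R M : Type*} [Ring R] [AddCommGroup M] [Module R M]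
    (N : Submodule R M) :
    IsSmallSub R N ↔ N ≤ radM R M ∧ IsPSD R N := by
  constructor
  · intro hsmall
    constructor
    · apply le_sInf
      intro m hm
      by_contra hnm
      have hne : N ⊔ m ≠ m := fun h => hnm (le_trans le_sup_left (le_of_eq h))
      have hlt : m < N ⊔ m := lt_of_le_of_ne le_sup_right (Ne.symm hne)
      exact hm.1 (hsmall m (hm.2 _ hlt))
    · intro X hX
      exact ⟨⊥, bot_le, inferInstance, by rw [hsmall X hX]; exact isCompl_bot_top⟩
  · rintro ⟨hrad, hpsd⟩ L hNL
    obtain ⟨S, hSN, hproj, hcompl⟩ := hpsd L hNL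
    have hnocoat := no_coatom_of_summand_le_rad hcompl (le_trans hSN hrad)
    have hfun : ∀ f : ↥S →ₗ[R] R, ∀ q : ↥S, f q ∈ radM R R := by
      intro f q
      have hr : LinearMap.range f ≤ radM R R := by
        apply le_sInf
        intro 𝔪 h𝔪
        by_contra hnot
        exact hnocoat _ (isCoatom_comap f h𝔪 hnot)
      exact hr (LinearMap.mem_range_self f q)
    have hS0 : S = ⊥ := by
      rw [Submodule.eq_bot_iff]
      intro x hx
      have := proj_triv hproj hfun ⟨x, hx⟩
      exact congrArg Subtype.val this
    have := hcompl.sup_eq_top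
    rw [hS0, bot_sup_eq] at this
    exact this
end

section
/- A submodule N of a left R-module M is δ-small in M if and only if N ⊆ δ(M) and N is PSD in M. -/
open Submodule Function

/-- A left ideal is essential if it intersects every nonzero left ideal nontrivially. -/
def IsEssentialIdeal (R : Type*) [Ring R] (J : Ideal R) : Prop :=
  ∀ K : Ideal R, J ⊓ K = ⊥ → K = ⊥

/-- A module is singular if every element has essential annihilator. -/
def IsSingularMod (R : Type*) [Ring R] (A : Type*) [AddCommGroup A] [Module R A] : Prop :=
  ∀ a : A, IsEssentialIdeal R (LinearMap.ker (LinearMap.toSpanSingleton R A a))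

/-- `δ(M)`: the intersection of all submodules `K` with `M/K` singular simple. -/
def deltaM (R M : Type*) [Ring R] [AddCommGroup M] [Module R M] : Submodule R M :=
  sInf {K : Submodule R M | IsSimpleModule R (M ⧸ K) ∧ IsSingularMod R (M ⧸ K)}

/-- `N` is δ-small in `M`: whenever `N + X = M` with `M/X` singular, `X = M`. -/
def IsDeltaSmall (R : Type*) [Ring R] {M : Type*} [AddCommGroup M] [Module R M]
    (N : Submodule R M) : Prop :=
  ∀ X : Submodule R M, N ⊔ X = ⊤ → IsSingularMod R (M ⧸ X) → X = ⊤

/-!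
If `N` is δ-small and `N + X = M`, choose `Y ≤ N` maximal with `Y ∩ X = 0`. Then
`Y ⊕ (X ∩ N)` is essential in `N`, so `M/(X ⊕ Y)` is singular and hence `M = X ⊕ Y`.
The image of `N` under the projection onto `Y` is all of `Y`, so `Y` is δ-small in itself:
it is semisimple, each simple summand is nonsingular and therefore projective.

Conversely, if `N ≤ δ(M)` is PSD and `N + X = M` with `M/X` singular, then `M/X ≅ S` is
projective. A nonzero projective module has a maximal submodule (Bass: if `Rad P = P`, the
dual-basis coefficients `v` of any element satisfy `v = v B` with `B` a finite matrix over
the Jacobson radical, and `1 - B` is invertible). This gives a maximal `K ⊇ X` with `M/K`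
simple singular; then `N ≤ δ(M) ≤ K`, so `M = K`.
-/

section Lattice

variable {α : Type*} [CompleteLattice α]

theorem exists_maximal_le_disjoint [IsCompactlyGenerated α] (a b : α) :
    ∃ c, Maximal (fun d => d ≤ b ∧ Disjoint d a) c := by
  obtain ⟨c, -, hc⟩ := zorn_le_nonempty₀ {d | d ≤ b ∧ Disjoint d a}
    (fun C hC hchain _ _ => ⟨sSup C, ⟨sSup_le fun d hd => (hC hd).1,
      hchain.directedOn.disjoint_sSup_left.2 fun d hd => (hC hd).2⟩, fun _ => le_sSup⟩)
    ⊥ ⟨bot_le, disjoint_bot_left⟩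
  exact ⟨c, hc⟩

theorem Maximal.eq_bot_of_disjoint_sup_inf [IsModularLattice α] {a b c w : α}
    (hc : Maximal (fun d => d ≤ b ∧ Disjoint d a) c) (hwb : w ≤ b)
    (hw : Disjoint w (c ⊔ a ⊓ b)) : w = ⊥ := by
  have hcw : Disjoint (c ⊔ w) a := by
    set t := (c ⊔ w) ⊓ a
    have htab : t ≤ a ⊓ b := le_inf inf_le_right (inf_le_left.trans (sup_le hc.prop.1 hwb))
    have htc : t ≤ c := calc
      t ≤ (c ⊔ w) ⊓ (c ⊔ t) := le_inf inf_le_left le_sup_right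
      _ = c ⊔ w ⊓ (c ⊔ t) := sup_inf_assoc_of_le w le_sup_left
      _ = c := by
        rw [(hw.mono_right (sup_le_sup_left htab c)).eq_bot, sup_bot_eq]
    exact disjoint_iff_inf_le.2 ((le_inf htc inf_le_right).trans hc.prop.2.le_bot)
  have hwc : w ≤ c :=
    le_sup_right.trans (hc.eq_of_ge ⟨sup_le hc.prop.1 hwb, hcw⟩ le_sup_left).le
  exact hw.eq_bot_of_le (hwc.trans le_sup_left)

end Lattice

section Singular

variable {R : Type*} [Ring R]
variable {A B : Type*} [AddCommGroup A] [Module R A] [AddCommGroup B] [Module R B]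

theorem IsEssentialIdeal.mono {J₁ J₂ : Ideal R} (hJ : IsEssentialIdeal R J₁) (h : J₁ ≤ J₂) :
    IsEssentialIdeal R J₂ :=
  fun K hK => hJ K (eq_bot_iff.2 (hK ▸ inf_le_inf_right K h))

theorem IsSingularMod.of_surjective (hA : IsSingularMod R A) {f : A →ₗ[R] B}
    (hf : Surjective f) : IsSingularMod R B := by
  intro b
  obtain ⟨a, rfl⟩ := hf b
  refine (hA a).mono fun r hr => ?_
  simp only [LinearMap.mem_ker, LinearMap.toSpanSingleton_apply] at hr ⊢
  rw [← map_smul, hr, map_zero]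

theorem IsSingularMod.of_linearEquiv (hA : IsSingularMod R A) (e : A ≃ₗ[R] B) :
    IsSingularMod R B :=
  hA.of_surjective (f := e.toLinearMap) e.surjective

theorem isEssentialIdeal_comap_toSpanSingleton {N E : Submodule R A}
    (hE : ∀ W ≤ N, Disjoint W E → W = ⊥) {n : A} (hn : n ∈ N) :
    IsEssentialIdeal R (E.comap (LinearMap.toSpanSingleton R A n)) := by
  intro K hK
  have hKn : Submodule.map (LinearMap.toSpanSingleton R A n) K = ⊥ := by
    refine hE _ (map_le_iff_le_comap.2 fun r _ => show r • n ∈ N from N.smul_mem r hn) ?_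
    rw [disjoint_iff, map_inf_eq_map_inf_comap, inf_comm, hK, Submodule.map_bot]
  have hKE : K ≤ E.comap (LinearMap.toSpanSingleton R A n) :=
    (map_le_iff_le_comap.1 hKn.le).trans (comap_mono bot_le)
  exact eq_bot_iff.2 (hK ▸ le_inf hKE le_rfl)

theorem isSingularMod_quotient_of_essential {N E Q : Submodule R A}
    (hE : ∀ W ≤ N, Disjoint W E → W = ⊥) (hEQ : E ≤ Q) (hNQ : N ⊔ Q = ⊤) :
    IsSingularMod R (A ⧸ Q) := by
  intro a
  obtain ⟨m, rfl⟩ := Submodule.Quotient.mk_surjective Q a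
  obtain ⟨n, hn, q, hq, rfl⟩ := Submodule.mem_sup.1 (hNQ ▸ Submodule.mem_top : m ∈ N ⊔ Q)
  refine (isEssentialIdeal_comap_toSpanSingleton hE hn).mono fun r hr => ?_
  simp only [mem_comap, LinearMap.mem_ker, LinearMap.toSpanSingleton_apply] at hr ⊢
  rw [← Submodule.Quotient.mk_smul, Submodule.Quotient.mk_eq_zero, smul_add]
  exact Q.add_mem (hEQ hr) (Q.smul_mem r hq)

theorem IsSimpleModule.projective_of_not_isSingularMod [IsSimpleModule R A]
    (h : ¬ IsSingularMod R A) : Module.Projective R A := by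
  simp only [IsSingularMod, IsEssentialIdeal, not_forall] at h
  obtain ⟨a, K, hK, hK0⟩ := h
  set L := LinearMap.ker (LinearMap.toSpanSingleton R A a)
  have ha : a ≠ 0 := by
    rintro rfl
    exact hK0 (by simpa [L] using hK)
  have hL : IsCoatom L :=
    Ideal.isMaximal_def.1 (IsSimpleModule.ker_toSpanSingleton_isMaximal R ha)
  have hKL : ¬ K ≤ L := fun hle => hK0 (eq_bot_iff.2 (hK ▸ le_inf hle le_rfl))
  have hcompl : IsCompl L K := ⟨disjoint_iff.2 hK, hL.not_le_iff_codisjoint.1 hKL⟩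
  have : Module.Projective R K :=
    Module.Projective.of_split K.subtype (K.projectionOnto L hcompl.symm)
      (LinearMap.ext (projectionOnto_apply_left hcompl.symm))
  exact Module.Projective.of_equiv ((quotientEquivOfIsCompl L K hcompl).symm.trans
    (LinearMap.quotKerEquivOfSurjective _ (IsSimpleModule.toSpanSingleton_surjective R ha)))

end Singular

section Bass

open Matrix

variable {R P : Type*} [Ring R] [AddCommGroup P] [Module R P]

theorem isUnit_one_sub_of_mem_jacobson {x : R} (hx : x ∈ Ring.jacobson R) :
    IsUnit (1 - x) := by
  rw [← Ideal.jacobson_bot] at hx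
  obtain ⟨z, hz⟩ := Ideal.mem_jacobson_iff.1 hx (-1)
  rw [Ideal.mem_bot] at hz
  have hzx : z * (1 - x) = 1 := by
    rw [← sub_eq_zero, ← hz]; noncomm_ring
  -- `z = z * x + 1` is itself left invertible, and its left inverse must be `1 - x`
  have hz' : z = z * x + 1 := by rw [← hzx]; noncomm_ring
  obtain ⟨w, hw⟩ := Ideal.mem_jacobson_iff.1 ((Ideal.jacobson ⊥).mul_mem_left z hx) 1
  rw [Ideal.mem_bot] at hw
  have hwz : w * z = 1 := by
    rw [hz', ← sub_eq_zero, ← hw]; noncomm_ring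
  have hw1 : w = 1 - x := calc
    w = w * (z * (1 - x)) := by rw [hzx, mul_one]
    _ = 1 - x := by rw [← mul_assoc, hwz, one_mul]
  exact isUnit_iff_exists.2 ⟨z, hw1 ▸ hwz, hzx⟩

theorem Matrix.eq_zero_of_vecMul_eq_self {n : Type*} [Fintype n] [DecidableEq n]
    {B : Matrix n n R} (hB : ∀ i j, B i j ∈ Ring.jacobson R) {v : n → R}
    (hv : v ᵥ* B = v) : v = 0 := by
  have hBJ : B ∈ Ring.jacobson (Matrix n n R) := by
    have := Ideal.matrix_jacobson_le (n := n) (⊥ : Ideal R)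
      ((Ideal.mem_matrix n _ B).2 fun i j => Ideal.jacobson_bot (R := R) ▸ hB i j)
    rwa [Ideal.matrix_bot, Ideal.jacobson_bot] at this
  obtain ⟨W, hW, -⟩ := isUnit_iff_exists.1 (isUnit_one_sub_of_mem_jacobson hBJ)
  calc v = v ᵥ* ((1 - B) * W) := by rw [hW, vecMul_one]
    _ = (v - v ᵥ* B) ᵥ* W := by
      rw [← vecMul_vecMul, vecMul_sub, vecMul_one]
    _ = 0 := by rw [hv, sub_self, zero_vecMul]

theorem Module.Projective.subsingleton_of_jacobson_eq_top [Module.Projective R P]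
    (h : Module.jacobson R P = ⊤) : Subsingleton P := by
  classical
  obtain ⟨s, hs⟩ := Module.projective_def.1 ‹_›
  have hcoef : ∀ x y : P, s x y ∈ Ring.jacobson R := fun x y =>
    Module.le_comap_jacobson (Finsupp.lapply y ∘ₗ s) (h ▸ mem_top)
  suffices hs0 : ∀ x : P, s x = 0 from
    ⟨fun x y => by rw [← hs x, ← hs y, hs0, hs0]⟩
  intro x
  have hx : x = ∑ y ∈ (s x).support, s x y • y := by
    conv_lhs => rw [← hs x]
    simp [Finsupp.linearCombination_apply, Finsupp.sum]
  have hfix : (fun y : (s x).support => s x y) ᵥ* (fun y z : (s x).support => s y z) =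
      fun y : (s x).support => s x y := by
    ext z
    have hxz := congrArg (fun x' => s x' z) hx
    simp only [map_sum, map_smul, Finsupp.coe_finsetSum, Finset.sum_apply, Finsupp.smul_apply,
      smul_eq_mul] at hxz
    simp only [vecMul, dotProduct]
    rw [hxz, Finset.sum_coe_sort (s x).support (fun y => s x y * s y z)]
  have hzero := eq_zero_of_vecMul_eq_self (fun y z : (s x).support => hcoef y z) hfix
  ext y
  by_contra hy
  exact hy (congrFun hzero ⟨y, Finsupp.mem_support_iff.2 hy⟩)

theorem Module.Projective.exists_isCoatom [Module.Projective R P] [Nontrivial P] :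
    ∃ W : Submodule R P, IsCoatom W := by
  by_contra! h
  have : Module.jacobson R P = ⊤ := sInf_eq_top.2 fun W hW => (h W hW).elim
  exact not_subsingleton P (subsingleton_of_jacobson_eq_top this)

end Bass

section DeltaSmall

variable {R M : Type*} [Ring R] [AddCommGroup M] [Module R M] {N : Submodule R M}
variable {A : Type*} [AddCommGroup A] [Module R A]

theorem IsDeltaSmall.map (hN : IsDeltaSmall R N) {f : M →ₗ[R] A} (hf : Surjective f) :
    IsDeltaSmall R (N.map f) := by
  intro E hNE hE
  have hK : N ⊔ E.comap f = ⊤ := by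
    have := comap_map_eq_self (le_sup_of_le_right (LinearMap.ker_le_comap f) :
      LinearMap.ker f ≤ N ⊔ E.comap f)
    rwa [Submodule.map_sup, map_comap_eq_of_surjective hf, hNE, comap_top, eq_comm] at this
  have hker : LinearMap.ker (E.mkQ ∘ₗ f) = E.comap f := by
    rw [LinearMap.ker_comp, ker_mkQ]
  have e : (M ⧸ E.comap f) ≃ₗ[R] A ⧸ E := (quotEquivOfEq _ _ hker.symm).trans
    ((E.mkQ ∘ₗ f).quotKerEquivOfSurjective (E.mkQ_surjective.comp hf))
  have hKtop := hN _ hK (hE.of_linearEquiv e.symm)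
  rw [← map_comap_eq_of_surjective hf E, hKtop, Submodule.map_top, LinearMap.range_eq_top.2 hf]

theorem isSemisimpleModule_of_isDeltaSmall_top (h : IsDeltaSmall R (⊤ : Submodule R A)) :
    IsSemisimpleModule R A where
  exists_isCompl E := by
    obtain ⟨C, hC⟩ := exists_maximal_le_disjoint E ⊤
    refine ⟨C, hC.prop.2.symm, codisjoint_iff.2 (h _ (top_sup_eq _) ?_)⟩
    exact isSingularMod_quotient_of_essential
      (fun W _ hW => hC.eq_bot_of_disjoint_sup_inf le_top hW)
      (sup_le le_sup_right (inf_le_left.trans le_sup_left)) (top_sup_eq _)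

theorem projective_of_isDeltaSmall_top (h : IsDeltaSmall R (⊤ : Submodule R A)) :
    Module.Projective R A := by
  have := isSemisimpleModule_of_isDeltaSmall_top h
  have hsing : ∀ m : Submodule R A, IsSingularMod R m → m = ⊥ := fun m hm => by
    obtain ⟨C, hC⟩ := exists_isCompl m
    have hCtop := h C (top_sup_eq _)
      (hm.of_linearEquiv (quotientEquivOfIsCompl C m hC.symm).symm)
    exact disjoint_top.1 (hCtop ▸ hC.disjoint)
  obtain ⟨s, e, -, hs⟩ := IsSemisimpleModule.exists_linearEquiv_dfinsupp R A
  have : ∀ m : s, Module.Projective R m.1 := fun m =>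
    have := hs m
    IsSimpleModule.projective_of_not_isSingularMod fun hm =>
      (isSimpleModule_iff_isAtom.1 this).1 (hsing _ hm)
  exact Module.Projective.of_equiv e.symm

theorem IsDeltaSmall.le_deltaM (hN : IsDeltaSmall R N) : N ≤ deltaM R M :=
  le_sInf fun K ⟨hsimple, hsing⟩ => by
    have hK := isSimpleModule_iff_isCoatom.1 hsimple
    by_contra hNK
    exact hK.1 (hN K (codisjoint_iff.1 (hK.not_le_iff_codisjoint.1 hNK).symm) hsing)

theorem IsDeltaSmall.isPSD (hN : IsDeltaSmall R N) : IsPSD R N := by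
  intro X hX
  obtain ⟨Y, hY⟩ := exists_maximal_le_disjoint X N
  have hNXY : N ⊔ (X ⊔ Y) = ⊤ := top_unique (hX ▸ sup_le_sup_left le_sup_left N)
  have hXY : X ⊔ Y = ⊤ := hN _ hNXY <| isSingularMod_quotient_of_essential
    (fun W hW => hY.eq_bot_of_disjoint_sup_inf hW)
    (sup_le le_sup_right (inf_le_left.trans le_sup_left)) hNXY
  have hYX : IsCompl Y X := ⟨hY.prop.2, codisjoint_iff.2 (sup_comm X Y ▸ hXY)⟩
  have hmap : N.map (Y.projectionOnto X hYX) = ⊤ :=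
    top_unique fun y _ => ⟨y, hY.prop.1 y.2, projectionOnto_apply_left hYX y⟩
  have hδ := hN.map (projectionOnto_surjective hYX)
  rw [hmap] at hδ
  exact ⟨Y, hY.prop.1, projective_of_isDeltaSmall_top hδ, hYX⟩

theorem eq_top_of_sup_eq_top_of_le_deltaM {X : Submodule R M} (hδ : N ≤ deltaM R M) (hX : N ⊔ X = ⊤)
    (hsing : IsSingularMod R (M ⧸ X)) [Module.Projective R (M ⧸ X)] : X = ⊤ := by
  by_contra hXtop
  have : Nontrivial (M ⧸ X) := Submodule.Quotient.nontrivial_iff.2 hXtop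
  obtain ⟨W, hW⟩ := Module.Projective.exists_isCoatom (R := R) (P := M ⧸ X)
  have hK : IsCoatom (W.comap X.mkQ) := (isCoatom_comap_iff X.mkQ_surjective).2 hW
  have hXK : X ≤ W.comap X.mkQ := (ker_mkQ X).ge.trans (LinearMap.ker_le_comap _)
  have hδK : deltaM R M ≤ W.comap X.mkQ :=
    sInf_le ⟨isSimpleModule_iff_isCoatom.2 hK, hsing.of_surjective (factor_surjective hXK)⟩
  exact hK.1 (top_unique (hX ▸ sup_le (hδ.trans hδK) hXK))

theorem IsPSD.isDeltaSmall_of_le_deltaM (hN : IsPSD R N) (hδ : N ≤ deltaM R M) :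
    IsDeltaSmall R N := by
  intro X hX hsing
  obtain ⟨S, -, hS, hSX⟩ := hN X hX
  have := Module.Projective.of_equiv (quotientEquivOfIsCompl X S hSX.symm).symm
  exact eq_top_of_sup_eq_top_of_le_deltaM hδ hX hsing

end DeltaSmall

theorem stmt6 {R M : Type*} [Ring R] [AddCommGroup M] [Module R M]
    (N : Submodule R M) :
    IsDeltaSmall R N ↔ N ≤ deltaM R M ∧ IsPSD R N :=
  ⟨fun h => ⟨h.le_deltaM, h.isPSD⟩, fun ⟨hδ, hN⟩ => hN.isDeltaSmall_of_le_deltaM hδ⟩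
end

section
/- Every J(R)-supplemented left R-module is supplemented. -/
open Submodule Function

section JacLemmas
variable {R : Type*} [Ring R]

lemma exists_left_inv_one_sub {a : R} (ha : a ∈ Ideal.jacobson (⊥ : Ideal R)) :
    ∃ z : R, z * (1 - a) = 1 := by
  obtain ⟨z, hz⟩ := Ideal.mem_jacobson_iff.1 ha (-1)
  rw [Ideal.mem_bot] at hz
  refine ⟨z, ?_⟩
  have h2 : z * (1 - a) - 1 = z * -1 * a + z - 1 := by noncomm_ring
  rw [hz] at h2
  exact sub_eq_zero.mp h2

lemma isUnit_one_sub_of_mem_jacobson_s9 {a : R} (ha : a ∈ Ideal.jacobson (⊥ : Ideal R)) :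
    IsUnit (1 - a) := by
  obtain ⟨z, hz⟩ := exists_left_inv_one_sub ha
  have hz' : z = 1 - -(z * a) := by
    have h : z * (1 - a) = z - z * a := by noncomm_ring
    rw [h] at hz
    rw [sub_neg_eq_add]
    exact (sub_eq_iff_eq_add.mp hz)
  obtain ⟨w, hw⟩ := exists_left_inv_one_sub
    (neg_mem (Ideal.mul_mem_left _ z ha) : -(z * a) ∈ Ideal.jacobson (⊥ : Ideal R))
  rw [← hz'] at hw
  have hwz : w = 1 - a := by
    calc w = w * (z * (1 - a)) := by rw [hz, mul_one]
    _ = w * z * (1 - a) := by rw [mul_assoc]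
    _ = 1 - a := by rw [hw, one_mul]
  exact ⟨⟨1 - a, z, by rw [← hwz]; exact hw, hz⟩, rfl⟩

lemma isUnit_one_sub_mul_comm {a b : R} (h : IsUnit (1 - a * b)) : IsUnit (1 - b * a) := by
  obtain ⟨u, hu⟩ := h
  have h1 : (1 - a * b) * ↑u⁻¹ = 1 := by rw [← hu]; exact u.mul_inv
  have h2 : (↑u⁻¹ : R) * (1 - a * b) = 1 := by rw [← hu]; exact u.inv_mul
  refine ⟨⟨1 - b * a, 1 + b * ↑u⁻¹ * a, ?_, ?_⟩, rfl⟩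
  · calc (1 - b * a) * (1 + b * ↑u⁻¹ * a)
        = 1 + b * ((1 - a * b) * ↑u⁻¹) * a - b * a := by noncomm_ring
    _ = 1 := by rw [h1]; noncomm_ring
  · calc (1 + b * ↑u⁻¹ * a) * (1 - b * a)
        = 1 + b * ((↑u⁻¹ : R) * (1 - a * b)) * a - b * a := by noncomm_ring
    _ = 1 := by rw [h2]; noncomm_ring

lemma mul_mem_jacobson_bot {a : R} (ha : a ∈ Ideal.jacobson (⊥ : Ideal R)) (r : R) :
    a * r ∈ Ideal.jacobson (⊥ : Ideal R) := by
  rw [Ideal.mem_jacobson_iff]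
  intro y
  have hmem : r * (-y * a) ∈ Ideal.jacobson (⊥ : Ideal R) := by
    rw [← mul_assoc]
    exact Ideal.mul_mem_left _ _ ha
  have h1 : IsUnit (1 - r * (-y * a)) := isUnit_one_sub_of_mem_jacobson_s9 hmem
  have h2 : IsUnit (1 - -y * a * r) := isUnit_one_sub_mul_comm h1
  have h3 : IsUnit (1 + y * a * r) := by
    have he : (1 : R) + y * a * r = 1 - -y * a * r := by noncomm_ring
    rw [he]; exact h2
  obtain ⟨u, hu⟩ := h3
  refine ⟨↑u⁻¹, ?_⟩
  rw [Ideal.mem_bot]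
  have h4 : (↑u⁻¹ : R) * (1 + y * a * r) = 1 := by rw [← hu]; exact u.inv_mul
  calc ↑u⁻¹ * y * (a * r) + ↑u⁻¹ - 1
      = ↑u⁻¹ * (1 + y * a * r) - 1 := by noncomm_ring
    _ = 0 := by rw [h4, sub_self]

lemma nakayama_fin {ι : Type*} [DecidableEq ι] (T : Finset ι) :
    ∀ (x : ι → R) (a : ι → ι → R), (∀ i j, a i j ∈ Ideal.jacobson (⊥ : Ideal R)) →
    (∀ i ∈ T, x i = ∑ k ∈ T, x k * a k i) → ∀ i ∈ T, x i = 0 := by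
  induction T using Finset.induction_on with
  | empty => intro x a _ _ i hi; exact absurd hi (Finset.notMem_empty i)
  | @insert n T' hn ih =>
    intro x a haJ hx
    have hu : IsUnit (1 - a n n) := isUnit_one_sub_of_mem_jacobson_s9 (haJ n n)
    have huu : (1 - a n n) * ↑hu.unit⁻¹ = 1 := hu.mul_val_inv
    set u : R := ↑hu.unit⁻¹ with hudef
    have hxn : x n = ∑ k ∈ T', x k * (a k n * u) := by
      have h1 := hx n (Finset.mem_insert_self n T')
      rw [Finset.sum_insert hn] at h1
      have h2 : x n * (1 - a n n) = ∑ k ∈ T', x k * a k n := by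
        rw [mul_sub, mul_one, sub_eq_iff_eq_add']
        exact h1
      calc x n = x n * ((1 - a n n) * u) := by rw [huu, mul_one]
        _ = x n * (1 - a n n) * u := by rw [mul_assoc]
        _ = (∑ k ∈ T', x k * a k n) * u := by rw [h2]
        _ = ∑ k ∈ T', x k * (a k n * u) := by
            rw [Finset.sum_mul]
            exact Finset.sum_congr rfl fun k _ => by rw [mul_assoc]
    set b : ι → ι → R := fun k i => a k i + a k n * u * a n i with hbdef
    have hbJ : ∀ k i, b k i ∈ Ideal.jacobson (⊥ : Ideal R) := fun k i =>
      add_mem (haJ k i) (mul_mem_jacobson_bot (mul_mem_jacobson_bot (haJ k n) u) (a n i))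
    have hx' : ∀ i ∈ T', x i = ∑ k ∈ T', x k * b k i := by
      intro i hi
      have h1 := hx i (Finset.mem_insert_of_mem hi)
      rw [Finset.sum_insert hn] at h1
      rw [h1, hxn, Finset.sum_mul, ← Finset.sum_add_distrib]
      exact Finset.sum_congr rfl fun k _ => by rw [hbdef]; noncomm_ring
    have hz := ih x b hbJ hx'
    intro i hi
    rcases Finset.mem_insert.1 hi with rfl | hi'
    · rw [hxn]
      exact Finset.sum_eq_zero fun k hk => by rw [hz k hk, zero_mul]
    · exact hz i hi'

lemma coord_mem_jacobson {ι : Type*} {w : ι →₀ R}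
    (hw : w ∈ (Ideal.jacobson (⊥ : Ideal R)) • (⊤ : Submodule R (ι →₀ R))) (j : ι) :
    w j ∈ Ideal.jacobson (⊥ : Ideal R) := by
  refine Submodule.smul_induction_on hw ?_ ?_
  · intro a ha f _
    rw [Finsupp.smul_apply, smul_eq_mul]
    exact mul_mem_jacobson_bot ha (f j)
  · intro f g hf hg
    rw [Finsupp.add_apply]
    exact add_mem hf hg

lemma projective_jacobson_smul_eq_zero {P : Type*} [AddCommGroup P] [Module R P]
    (hP : Module.Projective R P)
    (h : ∀ p : P, p ∈ (Ideal.jacobson (⊥ : Ideal R)) • (⊤ : Submodule R P)) (x : P) :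
    x = 0 := by
  classical
  obtain ⟨s, hs⟩ := Module.projective_def.1 hP
  set v : P →₀ R := s x with hv
  have hcoord : ∀ (p : P) (j : P), s p j ∈ Ideal.jacobson (⊥ : Ideal R) := by
    intro p j
    have h2 : s p ∈ Submodule.map s ((Ideal.jacobson (⊥ : Ideal R)) • ⊤) :=
      Submodule.mem_map_of_mem (h p)
    rw [Submodule.map_smul''] at h2
    exact coord_mem_jacobson (Submodule.smul_mono le_rfl le_top h2) j
  have hxsum : x = ∑ k ∈ v.support, v k • k := by
    conv_lhs => rw [← hs x]
    rw [← hv, Finsupp.linearCombination_apply, Finsupp.sum]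
    rfl
  have hvsum : v = ∑ k ∈ v.support, v k • s k := by
    conv_lhs => rw [hv]
    conv_lhs => rw [hxsum]
    rw [map_sum]
    exact Finset.sum_congr rfl fun k _ => by rw [map_smul]
  have hrel : ∀ j, v j = ∑ k ∈ v.support, v k * s k j := by
    intro j
    conv_lhs => rw [hvsum]
    rw [Finsupp.finset_sum_apply]
    exact Finset.sum_congr rfl fun k _ => by rw [Finsupp.smul_apply, smul_eq_mul]
  have hzero : ∀ i ∈ v.support, v i = 0 :=
    nakayama_fin v.support (fun k => v k) (fun k i => s k i)
      (fun k i => hcoord k i) (fun i _ => hrel i)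
  have hv0 : v = 0 := by
    ext j
    by_cases hj : j ∈ v.support
    · exact hzero j hj
    · exact Finsupp.notMem_support_iff.1 hj
  calc x = Finsupp.linearCombination R id (s x) := (hs x).symm
    _ = 0 := by rw [← hv, hv0, map_zero]

end JacLemmas

theorem stmt9 {R M : Type*} [Ring R] [AddCommGroup M] [Module R M]
    (h : IsISupplemented (Ideal.jacobson (⊥ : Ideal R)) M) :
    IsSupplemented R M := by
  intro X
  obtain ⟨Y, hXY, hle, hPSD⟩ := h X
  refine ⟨Y, hXY, ?_⟩
  intro L hL
  obtain ⟨S, hSN, hSproj, hcompl⟩ := hPSD L hL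
  have hS1 : ∀ y : ↥Y, y ∈ S → y ∈ (Ideal.jacobson (⊥ : Ideal R)) • S := by
    intro y hy
    have hyX : (y : M) ∈ X := hSN hy
    have hyJY : (y : M) ∈ (Ideal.jacobson (⊥ : Ideal R)) • Y :=
      hle (Submodule.mem_inf.2 ⟨hyX, y.2⟩)
    have hyT : y ∈ (Ideal.jacobson (⊥ : Ideal R)) • (⊤ : Submodule R ↥Y) :=
      (Submodule.mem_smul_top_iff _ Y y).2 hyJY
    have hsup : S ⊔ L = ⊤ := hcompl.sup_eq_top
    rw [← hsup, Submodule.smul_sup] at hyT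
    obtain ⟨a, ha, b, hb, hab⟩ := Submodule.mem_sup.1 hyT
    have haS : a ∈ S := Submodule.smul_le_right ha
    have hbL : b ∈ L := Submodule.smul_le_right hb
    have hbS : b ∈ S := by
      have : b = y - a := by rw [← hab]; abel
      rw [this]; exact sub_mem hy haS
    have hb0 : b = 0 := Submodule.disjoint_def.1 hcompl.disjoint b hbS hbL
    rw [← hab, hb0, add_zero]
    exact ha
  have hS0 : S = ⊥ := by
    rw [eq_bot_iff]
    intro z hz
    have hall : ∀ p : ↥S, p ∈ (Ideal.jacobson (⊥ : Ideal R)) • (⊤ : Submodule R ↥S) :=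
      fun p => (Submodule.mem_smul_top_iff _ S p).2 (hS1 p p.2)
    have hz0 := projective_jacobson_smul_eq_zero hSproj hall ⟨z, hz⟩
    rw [Submodule.mem_bot]
    exact congrArg Subtype.val hz0
  have hsup : S ⊔ L = ⊤ := hcompl.sup_eq_top
  rw [hS0, bot_sup_eq] at hsup
  exact hsup
end

section
/- If M is a projective supplemented left R-module, then M is J(R)-supplemented. -/
open Submodule Function

section Aux

variable {R : Type*} [Ring R] {M : Type*} [AddCommGroup M] [Module R M]

/-- Relative smallness: `N` is small in the submodule `Y` (ambient form). -/
def SmallIn (N Y : Submodule R M) : Prop := ∀ L ≤ Y, N ⊔ L = Y → L = Y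

lemma smallIn_of_isSmallSub {X Y : Submodule R M}
    (h : IsSmallSub R (comap Y.subtype X)) : SmallIn (X ⊓ Y) Y := by
  intro L hL hsup
  have inj : Injective (map Y.subtype) :=
    Submodule.map_injective_of_injective Y.injective_subtype
  have key : comap Y.subtype X ⊔ comap Y.subtype L = ⊤ := by
    apply inj
    rw [Submodule.map_sup, map_comap_subtype, map_comap_subtype, Submodule.map_top,
      range_subtype, inf_eq_right.mpr hL, inf_comm Y X]
    exact hsup
  have := h _ key
  have hYL : Y ≤ L := by
    have h2 := congrArg (map Y.subtype) this
    rw [map_comap_subtype, Submodule.map_top, range_subtype] at h2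
    exact inf_eq_left.mp h2
  exact le_antisymm hL hYL

lemma SmallIn.mono {N N' Y : Submodule R M} (h : SmallIn N Y) (hN' : N' ≤ N) (hNY : N ≤ Y) :
    SmallIn N' Y := by
  intro L hL hsup
  refine h L hL (le_antisymm (sup_le hNY hL) ?_)
  calc Y = N' ⊔ L := hsup.symm
    _ ≤ N ⊔ L := sup_le_sup_right hN' L

lemma SmallIn.map {K Z : Submodule R M} (f : M →ₗ[R] M) (hKZ : K ≤ Z) (h : SmallIn K Z) :
    SmallIn (map f K) (map f Z) := by
  intro L hL hsup
  have hZ : K ⊔ (comap f L ⊓ Z) = Z := by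
    refine le_antisymm (sup_le hKZ inf_le_right) fun z hz => ?_
    have : f z ∈ Submodule.map f K ⊔ L := by rw [hsup]; exact mem_map_of_mem hz
    obtain ⟨a, ha, b, hb, hab⟩ := mem_sup.mp this
    obtain ⟨k, hk, rfl⟩ := ha
    have hzk : z - k ∈ comap f L ⊓ Z :=
      ⟨by simpa [map_sub, ← hab] using hb, sub_mem hz (hKZ hk)⟩
    have hz2 : z = k + (z - k) := by abel
    rw [hz2]
    exact add_mem (mem_sup_left hk) (mem_sup_right hzk)
  have heq := h _ inf_le_right hZ
  refine le_antisymm hL ?_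
  intro x hx
  obtain ⟨z, hz, rfl⟩ := hx
  have hz2 : z ∈ comap f L ⊓ Z := by rw [heq]; exact hz
  exact hz2.1

/-- π-projectivity consequence of projectivity. -/
lemma exists_piProj (hp : Module.Projective R M) {X Y : Submodule R M} (h : X ⊔ Y = ⊤) :
    ∃ e : M →ₗ[R] M, LinearMap.range e ≤ X ∧ ∀ m, m - e m ∈ Y := by
  let φ : (X × Y) →ₗ[R] M := X.subtype.coprod Y.subtype
  have hφ : Surjective φ := by
    intro m
    have : m ∈ X ⊔ Y := h ▸ mem_top
    obtain ⟨x, hx, y, hy, hxy⟩ := mem_sup.mp this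
    exact ⟨(⟨x, hx⟩, ⟨y, hy⟩), hxy⟩
  obtain ⟨g, hg⟩ := Module.projective_lifting_property (h := hp) φ LinearMap.id hφ
  refine ⟨X.subtype ∘ₗ (LinearMap.fst R X Y) ∘ₗ g, ?_, ?_⟩
  · intro x hx
    obtain ⟨m, rfl⟩ := hx
    exact ((g m).1 : X).2
  · intro m
    have hm : ((g m).1 : M) + ((g m).2 : M) = m := by
      have := congrArg (fun f => f m) hg
      simpa [φ, LinearMap.coprod_apply] using this
    have h2 : m - ((g m).1 : M) = ((g m).2 : M) := sub_eq_of_eq_add' hm.symm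
    show m - ((g m).1 : M) ∈ Y
    rw [h2]
    exact ((g m).2).2

/-- Core lemma: mutual supplements in a π-projective situation intersect trivially. -/
lemma inf_eq_bot_of_mutual {U Y : Submodule R M}
    (hU : SmallIn (U ⊓ Y) U) (hY : SmallIn (U ⊓ Y) Y) (e : M →ₗ[R] M)
    (he1 : LinearMap.range e ≤ U) (he2 : ∀ m, m - e m ∈ Y) : U ⊓ Y = ⊥ := by
  set N := U ⊓ Y with hN
  have heInU : ∀ m, e m ∈ U := fun m => he1 ⟨m, rfl⟩
  have heV : ∀ v ∈ Y, e v ∈ N := by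
    intro v hv
    refine ⟨heInU v, ?_⟩
    have : v - (v - e v) ∈ Y := sub_mem hv (he2 v)
    simpa using this
  have hsubU : ∀ u ∈ U, u - e u ∈ N := fun u hu => ⟨sub_mem hu (heInU u), he2 u⟩
  have hU1 : N ⊔ Submodule.map e U = U := by
    refine le_antisymm (sup_le inf_le_left ?_) ?_
    · rintro x ⟨u, hu, rfl⟩; exact heInU u
    · intro u hu
      have h2 : u - e u ∈ N := hsubU u hu
      have h3 : u = e u + (u - e u) := by abel
      rw [h3]
      exact add_mem (mem_sup_right (mem_map_of_mem hu)) (mem_sup_left h2)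
  have hUe : Submodule.map e U = U := by
    refine hU _ ?_ hU1
    rintro x ⟨u, hu, rfl⟩; exact heInU u
  have hNe : N ≤ Submodule.map e N := by
    intro x hx
    have hxU : x ∈ Submodule.map e U := hUe.symm ▸ hx.1
    obtain ⟨u, hu, rfl⟩ := hxU
    have huN : u ∈ N := by
      have h1 : u - e u ∈ N := hsubU u hu
      have h3 : u = e u + (u - e u) := by abel
      rw [h3]
      exact add_mem hx h1
    exact mem_map_of_mem huN
  have hY1 : N ⊔ (LinearMap.ker e ⊓ Y) = Y := by
    refine le_antisymm (sup_le inf_le_right inf_le_right) ?_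
    intro v hv
    obtain ⟨n, hn, hne⟩ := hNe (heV v hv)
    have hvn : v - n ∈ LinearMap.ker e ⊓ Y :=
      ⟨by simp [LinearMap.mem_ker, map_sub, hne], sub_mem hv hn.2⟩
    have h3 : v = n + (v - n) := by abel
    rw [h3]
    exact add_mem (mem_sup_left hn) (mem_sup_right hvn)
  have hker : LinearMap.ker e ⊓ Y = Y := hY _ inf_le_right hY1
  have hYker : Y ≤ LinearMap.ker e := by rw [← hker]; exact inf_le_left
  refine le_bot_iff.mp fun x hx => ?_
  obtain ⟨n, hn, rfl⟩ := hNe hx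
  have : e n = 0 := hYker hn.2
  simpa [this]

/-- In a projective module, every small submodule lies in `J(R) • ⊤`. -/
lemma small_le_jacobson_smul {P : Type*} [AddCommGroup P] [Module R P]
    (hp : Module.Projective R P) {K : Submodule R P} (hK : IsSmallSub R K) :
    K ≤ (Ideal.jacobson (⊥ : Ideal R)) • (⊤ : Submodule R P) := by
  have hfun : ∀ f : P →ₗ[R] R, Submodule.map f K ≤ Ideal.jacobson (⊥ : Ideal R) := by
    intro f
    refine le_sInf fun m hm => ?_
    obtain ⟨-, hmax⟩ := hm
    by_contra hc
    rw [SetLike.not_le_iff_exists] at hc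
    obtain ⟨x, hx1, hx2⟩ := hc
    have hlt : m < m ⊔ Submodule.map f K :=
      lt_of_le_of_ne le_sup_left (fun hmeq => hx2 (hmeq ▸ mem_sup_right hx1))
    have htop : m ⊔ Submodule.map f K = ⊤ := hmax.out.2 _ hlt
    have hsup : K ⊔ Submodule.comap f m = ⊤ := by
      rw [eq_top_iff]
      intro p _
      have : f p ∈ m ⊔ Submodule.map f K := htop ▸ Submodule.mem_top
      obtain ⟨a, ha, b, hb, hab⟩ := mem_sup.mp this
      obtain ⟨k, hk, rfl⟩ := hb
      have hpk : p - k ∈ Submodule.comap f m := by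
        simp only [Submodule.mem_comap, map_sub]
        rw [show f p - f k = a by rw [← hab]; abel]
        exact ha
      have h4 : p = k + (p - k) := by abel
      rw [h4]
      exact add_mem (mem_sup_left hk) (mem_sup_right hpk)
    have heq := hK _ hsup
    apply hx2
    obtain ⟨k, hk, rfl⟩ := hx1
    have : k ∈ Submodule.comap f m := by rw [heq]; exact Submodule.mem_top
    exact this
  obtain ⟨s, hs⟩ := Module.projective_def.mp hp
  intro k hk
  have hkeq : (Finsupp.linearCombination R id) (s k) = k := hs k
  rw [← hkeq, Finsupp.linearCombination_apply, Finsupp.sum]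
  refine Submodule.sum_mem _ fun m hm => ?_
  have hcoef : (s k) m ∈ Ideal.jacobson (⊥ : Ideal R) := by
    have : (s k) m = ((Finsupp.lapply m).comp s) k := rfl
    rw [this]
    exact hfun _ (mem_map_of_mem hk)
  exact Submodule.smul_mem_smul hcoef mem_top

lemma projective_bot : Module.Projective R ↥(⊥ : Submodule R M) := by
  refine Module.projective_def.mpr ⟨0, fun x => ?_⟩
  apply Subsingleton.elim

end Aux


theorem stmt10 {R M : Type*} [Ring R] [AddCommGroup M] [Module R M]
    (hp : Module.Projective R M) (hs : IsSupplemented R M) :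
    IsISupplemented (Ideal.jacobson (⊥ : Ideal R)) M := by
  haveI : Module.Projective R M := hp
  intro X
  obtain ⟨Y, hXY, hXYsmall⟩ := hs X
  obtain ⟨Z, hYZ, hYZsmall⟩ := hs Y
  obtain ⟨e, he1, he2⟩ := exists_piProj hp hXY
  set U := Submodule.map e Z with hUdef
  have hUX : U ≤ X := by rintro x ⟨z, hz, rfl⟩; exact he1 ⟨z, rfl⟩
  have hUY : U ⊔ Y = ⊤ := by
    rw [eq_top_iff]; intro m _
    have hm : m ∈ Y ⊔ Z := hYZ ▸ mem_top
    obtain ⟨y, hy, z, hz, hyz⟩ := mem_sup.mp hm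
    have h1 : e z ∈ U := mem_map_of_mem hz
    have h2 : y + (z - e z) ∈ Y := add_mem hy (he2 z)
    have h3 : m = e z + (y + (z - e z)) := by rw [← hyz]; abel
    rw [h3]; exact add_mem (mem_sup_left h1) (mem_sup_right h2)
  have hYZs : SmallIn (Y ⊓ Z) Z := smallIn_of_isSmallSub hYZsmall
  have hXYs : SmallIn (X ⊓ Y) Y := smallIn_of_isSmallSub hXYsmall
  have hUYleq : U ⊓ Y ≤ Submodule.map e (Y ⊓ Z) := by
    intro x hx
    obtain ⟨z, hz, rfl⟩ := hx.1
    have hzY : z ∈ Y := by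
      have h4 : z = e z + (z - e z) := by abel
      rw [h4]
      exact add_mem hx.2 (he2 z)
    exact mem_map_of_mem ⟨hzY, hz⟩
  have hsmallU : SmallIn (U ⊓ Y) U :=
    (hYZs.map e inf_le_right).mono hUYleq (Submodule.map_mono inf_le_right)
  have hsmallY : SmallIn (U ⊓ Y) Y := hXYs.mono (inf_le_inf_right Y hUX) inf_le_right
  obtain ⟨e', he'1, he'2⟩ := exists_piProj hp hUY
  have hbot : U ⊓ Y = ⊥ := inf_eq_bot_of_mutual hsmallU hsmallY e' he'1 he'2
  have hcompl : IsCompl Y U :=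
    ⟨disjoint_iff.mpr (by rw [inf_comm]; exact hbot),
     codisjoint_iff.mpr (by rw [sup_comm]; exact hUY)⟩
  have hYproj : Module.Projective R ↥Y :=
    Module.Projective.of_split Y.subtype (Y.linearProjOfIsCompl U hcompl)
      (linearProjOfIsCompl_comp_subtype hcompl)
  refine ⟨Y, hXY, ?_, ?_⟩
  · have hle := small_le_jacobson_smul hYproj hXYsmall
    have hm := Submodule.map_mono (f := Y.subtype) hle
    rw [map_comap_subtype, Submodule.map_smul'', Submodule.map_top, range_subtype] at hm
    rw [inf_comm]
    exact hm
  · intro X' hX'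
    refine ⟨⊥, bot_le, projective_bot, ?_⟩
    rw [hXYsmall X' hX']
    exact isCompl_bot_top
end

section
/- Let M be a π-projective left R-module and I an ideal of R. If submodules N and K are I-supplements of each other in M, then N ∩ K is projective. If moreover M is projective, then N and K are projective. -/
open Submodule Function

/-- `M` is π-projective: for submodules `N, K` with `N + K = M`, the natural map
`N ⊕ K → M` splits. -/
def IsPiProjective (R M : Type*) [Ring R] [AddCommGroup M] [Module R M] : Prop :=
  ∀ N K : Submodule R M, N ⊔ K = ⊤ →
    ∃ g : M →ₗ[R] ↥N × ↥K, (N.subtype.coprod K.subtype).comp g = LinearMap.id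

section lemmas
variable {R : Type*} [Ring R] {M M₂ : Type*} [AddCommGroup M] [Module R M]
  [AddCommGroup M₂] [Module R M₂]

theorem projective_prod {A B : Type*} [AddCommGroup A] [Module R A] [AddCommGroup B] [Module R B]
    [Module.Projective R A] [Module.Projective R B] : Module.Projective R (A × B) := by
  obtain ⟨sA, hsA⟩ := ‹Module.Projective R A›
  obtain ⟨sB, hsB⟩ := ‹Module.Projective R B›
  exact Module.Projective.of_split (M := (A →₀ R) × (B →₀ R))
    (LinearMap.prodMap sA sB)
    (LinearMap.prodMap (Finsupp.linearCombination R id) (Finsupp.linearCombination R id))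
    (by ext x <;> simp [hsA _, hsB _])

theorem isPSD_map (f : M →ₗ[R] M₂) (hf : Function.Injective f) {D : Submodule R M}
    (hD : IsPSD R D) : IsPSD R (D.map f) := by
  intro X hX
  have hmod : (D.map f ⊔ X) ⊓ LinearMap.range f = D.map f ⊔ (X ⊓ LinearMap.range f) :=
    sup_inf_assoc_of_le X LinearMap.map_le_range
  have hrange : D.map f ⊔ (X ⊓ LinearMap.range f) = LinearMap.range f := by
    rw [← hmod, hX, top_inf_eq]
  have htop : D ⊔ comap f X = ⊤ := by
    apply map_injective_of_injective hf
    rw [Submodule.map_sup, map_comap_eq, Submodule.map_top, inf_comm, hrange]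
  obtain ⟨S, hSD, hSp, hSc⟩ := hD (comap f X) htop
  refine ⟨S.map f, map_mono hSD, Module.Projective.of_equiv (equivMapOfInjective f hf S), ?_, ?_⟩
  · -- disjoint
    rw [disjoint_iff]
    have h1 : S.map f ⊓ X ≤ S.map f ⊓ (X ⊓ LinearMap.range f) :=
      le_inf inf_le_left (le_inf inf_le_right (le_trans inf_le_left LinearMap.map_le_range))
    have h2 : S.map f ⊓ (X ⊓ LinearMap.range f) = ⊥ := by
      rw [inf_comm X, ← map_comap_eq, ← map_inf f hf, disjoint_iff.mp hSc.disjoint,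
        Submodule.map_bot]
    exact le_antisymm (h2 ▸ h1) bot_le
  · -- codisjoint
    rw [codisjoint_iff]
    have h3 : S.map f ⊔ (LinearMap.range f ⊓ X) = LinearMap.range f := by
      rw [← map_comap_eq, ← Submodule.map_sup, codisjoint_iff.mp hSc.codisjoint,
        Submodule.map_top]
    have h4 : LinearMap.range f ≤ S.map f ⊔ X := by
      rw [← h3]
      exact sup_le le_sup_left (le_trans inf_le_right le_sup_right)
    refine le_antisymm le_top ?_
    rw [← hX]
    exact sup_le (le_trans LinearMap.map_le_range h4) le_sup_right

theorem isPSD_sup {D1 D2 : Submodule R M} (h1 : IsPSD R D1) (h2 : IsPSD R D2) :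
    IsPSD R (D1 ⊔ D2) := by
  intro X hX
  obtain ⟨S1, hS1D, hS1p, hS1c⟩ := h1 (D2 ⊔ X) (by rw [← sup_assoc]; exact hX)
  obtain ⟨S2, hS2D, hS2p, hS2c⟩ := h2 (S1 ⊔ X)
    (by rw [sup_left_comm]; exact codisjoint_iff.mp hS1c.codisjoint)
  have hdisj12 : S1 ⊓ S2 = ⊥ := by
    refine le_antisymm ?_ bot_le
    intro x hx
    have : x ∈ S2 ⊓ (S1 ⊔ X) := ⟨hx.2, le_sup_left (a := S1) (b := X) hx.1⟩
    rw [disjoint_iff.mp hS2c.disjoint] at this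
    exact this
  have hproj : Module.Projective R ↥(S1 ⊔ S2) := by
    haveI := hS1p; haveI := hS2p
    haveI : Module.Projective R (↥S1 × ↥S2) := projective_prod
    set π := (Submodule.inclusion (le_sup_left : S1 ≤ S1 ⊔ S2)).coprod
          (Submodule.inclusion (le_sup_right : S2 ≤ S1 ⊔ S2)) with hπ
    have hinj : Function.Injective π := by
      rintro ⟨a, b⟩ ⟨c, d⟩ hcd
      have h9 : (a : M) + b = (c : M) + d := congrArg Subtype.val hcd
      have hmem : (a : M) - c ∈ S1 ⊓ S2 := by
        refine ⟨sub_mem a.2 c.2, ?_⟩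
        have h10 : (a : M) - c = (d : M) - b := by linear_combination (norm := abel) h9
        rw [h10]; exact sub_mem d.2 b.2
      rw [hdisj12] at hmem
      have hac : (a : M) = c := sub_eq_zero.mp ((Submodule.mem_bot R).mp hmem)
      have hbd : (b : M) = d := by
        have := h9; rw [hac] at this; exact add_left_cancel this
      exact Prod.ext (Subtype.ext hac) (Subtype.ext hbd)
    have hsurj : Function.Surjective π := by
      rintro ⟨x, hx⟩
      obtain ⟨y, hy, z, hz, rfl⟩ := Submodule.mem_sup.mp hx
      exact ⟨(⟨y, hy⟩, ⟨z, hz⟩), Subtype.ext rfl⟩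
    exact Module.Projective.of_equiv (LinearEquiv.ofBijective π ⟨hinj, hsurj⟩)
  refine ⟨S1 ⊔ S2, sup_le (hS1D.trans le_sup_left) (hS2D.trans le_sup_right), hproj, ?_, ?_⟩
  · rw [disjoint_iff]
    refine le_antisymm ?_ bot_le
    rintro x ⟨hxS, hxX⟩
    obtain ⟨s1, hs1, s2, hs2, rfl⟩ := Submodule.mem_sup.mp hxS
    have h2m : s2 ∈ S2 ⊓ (S1 ⊔ X) := by
      refine ⟨hs2, ?_⟩
      have : s1 + s2 - s1 ∈ S1 ⊔ X :=
        sub_mem (le_sup_right (a := S1) hxX) (le_sup_left (b := X) hs1)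
      simpa using this
    rw [disjoint_iff.mp hS2c.disjoint] at h2m
    have hs20 : s2 = 0 := h2m
    subst hs20
    have h1m : s1 ∈ S1 ⊓ (D2 ⊔ X) := by
      refine ⟨hs1, le_sup_right (a := D2) ?_⟩
      simpa using hxX
    rw [disjoint_iff.mp hS1c.disjoint] at h1m
    simp [h1m]
  · rw [codisjoint_iff, sup_comm S1 S2, sup_assoc]
    exact codisjoint_iff.mp hS2c.codisjoint

end lemmas

theorem stmt12 {R M : Type*} [Ring R] [AddCommGroup M] [Module R M]
    (I : Ideal R) (hpi : IsPiProjective R M) (N K : Submodule R M)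
    (h1 : IsISupplementOf I N K) (h2 : IsISupplementOf I K N) :
    Module.Projective R ↥(N ⊓ K) ∧
      (Module.Projective R M → Module.Projective R ↥N ∧ Module.Projective R ↥K) := by
  obtain ⟨hKN1, -, hPSDN⟩ := h1
  obtain ⟨hNK1, -, hPSDK⟩ := h2
  obtain ⟨g, hg⟩ := hpi N K hNK1
  set φ := N.subtype.coprod K.subtype with hφ
  have hφg : ∀ m, φ (g m) = m := fun m => by
    have := LinearMap.congr_fun hg m
    simpa using this
  have hD1 : IsPSD R ((comap N.subtype K).map (LinearMap.inl R ↥N ↥K)) :=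
    isPSD_map _ LinearMap.inl_injective hPSDN
  have hD2 : IsPSD R ((comap K.subtype N).map (LinearMap.inr R ↥N ↥K)) :=
    isPSD_map _ LinearMap.inr_injective hPSDK
  have hD12 := isPSD_sup hD1 hD2
  have hker_le : LinearMap.ker φ ≤
      (comap N.subtype K).map (LinearMap.inl R ↥N ↥K) ⊔
        (comap K.subtype N).map (LinearMap.inr R ↥N ↥K) := by
    rintro ⟨n, k⟩ hw
    have h0 : (n : M) + k = 0 := by simpa [hφ] using hw
    have hn : n ∈ comap N.subtype K := by
      have : (n : M) = -(k : M) := eq_neg_of_add_eq_zero_left h0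
      simpa [Submodule.mem_comap, this] using K.neg_mem k.2
    have hk : k ∈ comap K.subtype N := by
      have : (k : M) = -(n : M) := eq_neg_of_add_eq_zero_right h0
      simpa [Submodule.mem_comap, this] using N.neg_mem n.2
    refine Submodule.mem_sup.mpr ⟨(n, 0), ⟨n, hn, rfl⟩, (0, k), ⟨k, hk, rfl⟩, by simp⟩
  have hkermem : ∀ w : ↥N × ↥K, w - g (φ w) ∈ LinearMap.ker φ := fun w => by
    simp [LinearMap.mem_ker, map_sub, hφg]
  have hkerG : IsCompl (LinearMap.ker φ) (LinearMap.range g) := by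
    constructor
    · rw [disjoint_iff]
      refine le_antisymm ?_ bot_le
      rintro x ⟨hxk, m, rfl⟩
      have : m = 0 := by rw [← hφg m]; exact hxk
      simp [this]
    · rw [codisjoint_iff]
      refine le_antisymm le_top ?_
      intro w _
      have : w = (w - g (φ w)) + g (φ w) := by abel
      rw [this]
      exact Submodule.add_mem_sup (hkermem w) ⟨φ w, rfl⟩
  have htop : ((comap N.subtype K).map (LinearMap.inl R ↥N ↥K) ⊔
      (comap K.subtype N).map (LinearMap.inr R ↥N ↥K)) ⊔ LinearMap.range g = ⊤ := by
    refine le_antisymm le_top ?_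
    rw [← codisjoint_iff.mp hkerG.codisjoint]
    exact sup_le (le_trans hker_le le_sup_left) le_sup_right
  obtain ⟨S, hSle, hSp, hSc⟩ := hD12 (LinearMap.range g) htop
  -- ker φ ≃ S
  have eS : ↥(LinearMap.ker φ) ≃ₗ[R] ↥S :=
    (Submodule.quotientEquivOfIsCompl _ _ hkerG.symm).symm.trans
      (Submodule.quotientEquivOfIsCompl _ _ hSc.symm)
  haveI hSp' := hSp
  have hkerproj : Module.Projective R ↥(LinearMap.ker φ) :=
    Module.Projective.of_equiv eS.symm
  -- ker φ ≃ N ⊓ K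
  have hmem : ∀ w : ↥(LinearMap.ker φ),
      ((N.subtype.comp (LinearMap.fst R ↥N ↥K)).comp (LinearMap.ker φ).subtype) w ∈ N ⊓ K := by
    rintro ⟨⟨n, k⟩, hw⟩
    have h0 : (n : M) + k = 0 := by simpa [hφ] using hw
    refine ⟨n.2, ?_⟩
    have : (n : M) = -(k : M) := eq_neg_of_add_eq_zero_left h0
    simpa [this] using K.neg_mem k.2
  set l : ↥(LinearMap.ker φ) →ₗ[R] ↥(N ⊓ K) :=
    LinearMap.codRestrict (N ⊓ K)
      ((N.subtype.comp (LinearMap.fst R ↥N ↥K)).comp (LinearMap.ker φ).subtype) hmem with hl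
  have hlinj : Function.Injective l := by
    rintro ⟨⟨n, k⟩, hw⟩ ⟨⟨n', k'⟩, hw'⟩ hll
    have h0 : (n : M) + k = 0 := by simpa [hφ] using hw
    have h0' : (n' : M) + k' = 0 := by simpa [hφ] using hw'
    have hnn : (n : M) = n' := by
      have := congrArg Subtype.val hll
      simpa [hl] using this
    have hkk : (k : M) = k' := by
      rw [eq_neg_of_add_eq_zero_right h0, eq_neg_of_add_eq_zero_right h0', hnn]
    exact Subtype.ext (Prod.ext (Subtype.ext hnn) (Subtype.ext hkk))
  have hlsurj : Function.Surjective l := by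
    rintro ⟨d, hdN, hdK⟩
    refine ⟨⟨(⟨d, hdN⟩, ⟨-d, K.neg_mem hdK⟩), ?_⟩, ?_⟩
    · simp [hφ, LinearMap.mem_ker]
    · exact Subtype.ext rfl
  have part1 : Module.Projective R ↥(N ⊓ K) :=
    Module.Projective.of_equiv (LinearEquiv.ofBijective l ⟨hlinj, hlsurj⟩)
  refine ⟨part1, fun hM => ?_⟩
  have ginj : Function.Injective g := fun a b hab => by
    have := congrArg φ hab
    rwa [hφg, hφg] at this
  haveI := hM
  haveI : Module.Projective R ↥(LinearMap.range g) :=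
    Module.Projective.of_equiv (LinearEquiv.ofInjective g ginj)
  haveI := hkerproj
  haveI : Module.Projective R (↥(LinearMap.ker φ) × ↥(LinearMap.range g)) := projective_prod
  haveI hW : Module.Projective R (↥N × ↥K) :=
    Module.Projective.of_equiv (Submodule.prodEquivOfIsCompl _ _ hkerG)
  constructor
  · exact Module.Projective.of_split (LinearMap.inl R ↥N ↥K) (LinearMap.fst R ↥N ↥K)
      (by ext; simp)
  · exact Module.Projective.of_split (LinearMap.inr R ↥N ↥K) (LinearMap.snd R ↥N ↥K)
      (by ext; simp)
end

section
/- Let M = A + B be left R-modules and I an ideal of R. If M/A has a projective I-cover, then B contains an I-supplement of A in M. -/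
open Submodule Function

/-- The image of a PSD submodule under a surjective linear map is PSD. -/
lemma isPSD_map_s13 {R : Type*} [Ring R] {P Q : Type*} [AddCommGroup P] [Module R P]
    [AddCommGroup Q] [Module R Q] (h : P →ₗ[R] Q) (hs : Surjective h)
    {K : Submodule R P} (hK : IsPSD R K) : IsPSD R (K.map h) := by
  intro Z hZ
  have hsum : K ⊔ Z.comap h = ⊤ := by
    rw [eq_top_iff]
    intro x _
    have hx : h x ∈ K.map h ⊔ Z := by rw [hZ]; trivial
    obtain ⟨k', hk', z, hz, heq⟩ := Submodule.mem_sup.mp hx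
    obtain ⟨k, hk, rfl⟩ := hk'
    have hxz : x - k ∈ Z.comap h := by
      have hz' : h (x - k) = z := by rw [map_sub]; rw [← heq]; abel
      simpa [Submodule.mem_comap, hz'] using hz
    exact Submodule.mem_sup.mpr ⟨k, hk, x - k, hxz, by abel⟩
  obtain ⟨S, hSK, hSproj, hScompl⟩ := hK _ hsum
  have hrestrict : ∀ x ∈ S, h x ∈ S.map h := fun x hx => Submodule.mem_map_of_mem hx
  have hinj : Function.Injective (h.restrict hrestrict) := by
    rintro ⟨a, ha⟩ ⟨b, hb⟩ hab
    have hab' : h a = h b := congrArg Subtype.val hab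
    have hmem : a - b ∈ S ⊓ Z.comap h := by
      refine ⟨sub_mem ha hb, ?_⟩
      simp [Submodule.mem_comap, map_sub, hab']
    have hz : a - b = 0 := by simpa using hScompl.disjoint.le_bot hmem
    exact Subtype.ext (sub_eq_zero.mp hz)
  have hsurj : Function.Surjective (h.restrict hrestrict) := by
    rintro ⟨q, hq⟩
    obtain ⟨s, hsS, rfl⟩ := hq
    exact ⟨⟨s, hsS⟩, rfl⟩
  have e : S ≃ₗ[R] (S.map h) := LinearEquiv.ofBijective _ ⟨hinj, hsurj⟩
  refine ⟨S.map h, Submodule.map_mono hSK, Module.Projective.of_equiv e, ?_, ?_⟩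
  · rw [Submodule.disjoint_def]
    rintro x ⟨s, hsS, rfl⟩ hxZ
    have : s ∈ S ⊓ Z.comap h := ⟨hsS, hxZ⟩
    have hz : s = 0 := by simpa using hScompl.disjoint.le_bot this
    simp [hz]
  · rw [codisjoint_iff, eq_top_iff]
    intro q _
    obtain ⟨p, rfl⟩ := hs q
    have hp : p ∈ S ⊔ Z.comap h := by
      rw [hScompl.codisjoint.eq_top]; trivial
    obtain ⟨s, hsS, w, hw, rfl⟩ := Submodule.mem_sup.mp hp
    rw [map_add]
    exact Submodule.add_mem_sup (Submodule.mem_map_of_mem hsS) hw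

theorem stmt13 {R : Type*} [Ring R] {M : Type u} [AddCommGroup M] [Module R M]
    (I : Ideal R) (A B : Submodule R M) (hAB : A ⊔ B = ⊤)
    (hcover : ∃ (P : Type u) (_ : AddCommGroup P) (_ : Module R P),
      Module.Projective R P ∧ ∃ f : P →ₗ[R] M ⧸ A, Surjective f ∧
        LinearMap.ker f ≤ I • (⊤ : Submodule R P) ∧ IsPSD R (LinearMap.ker f)) :
    ∃ Y : Submodule R M, Y ≤ B ∧ IsISupplementOf I Y A := by
  obtain ⟨P, _, _, hP, f, hfsurj, hker, hPSD⟩ := hcover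
  set g : ↥B →ₗ[R] M ⧸ A := A.mkQ ∘ₗ B.subtype with hg_def
  have hg : Surjective g := by
    intro x
    obtain ⟨m, rfl⟩ := A.mkQ_surjective x
    have hm : m ∈ A ⊔ B := by rw [hAB]; trivial
    obtain ⟨a, ha, b, hb, rfl⟩ := Submodule.mem_sup.mp hm
    refine ⟨⟨b, hb⟩, ?_⟩
    have hgb : g ⟨b, hb⟩ = A.mkQ b := rfl
    rw [hgb, Submodule.mkQ_apply]
    exact (Submodule.Quotient.eq A).mpr (by simpa using A.neg_mem ha)
  obtain ⟨h₀, hh₀⟩ := Module.projective_lifting_property g f hg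
  set h : P →ₗ[R] M := B.subtype ∘ₗ h₀ with hh_def
  have hπh : ∀ p, A.mkQ (h p) = f p := by
    intro p
    simpa [hg_def, hh_def] using LinearMap.congr_fun hh₀ p
  have hkf : ∀ p, (f p = 0 ↔ h p ∈ A) := by
    intro p
    rw [← hπh p, Submodule.mkQ_apply, Submodule.Quotient.mk_eq_zero]
  refine ⟨LinearMap.range h, ?_, ?_, ?_, ?_⟩
  · rintro y ⟨p, rfl⟩
    exact (h₀ p).2
  · rw [eq_top_iff]
    intro m _
    obtain ⟨p, hp⟩ := hfsurj (A.mkQ m)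
    have hmA : m - h p ∈ A := by
      rw [← Submodule.Quotient.mk_eq_zero A, ← Submodule.mkQ_apply, map_sub, hπh, hp,
        sub_self]
    exact Submodule.mem_sup.mpr ⟨m - h p, hmA, h p, LinearMap.mem_range_self h p,
      by abel⟩
  · rintro x ⟨hxA, p, rfl⟩
    have hpK : p ∈ LinearMap.ker f := by
      rw [LinearMap.mem_ker, hkf]; exact hxA
    have : h p ∈ (I • (⊤ : Submodule R P)).map h := Submodule.mem_map_of_mem (hker hpK)
    rwa [Submodule.map_smul'', Submodule.map_top] at this
  · have key : (LinearMap.ker f).map h.rangeRestrict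
        = Submodule.comap (LinearMap.range h).subtype A := by
      ext y
      constructor
      · rintro ⟨p, hpK, rfl⟩
        simp only [Submodule.mem_comap, Submodule.subtype_apply]
        have : h p ∈ A := (hkf p).mp (LinearMap.mem_ker.mp hpK)
        simpa using this
      · intro hy
        obtain ⟨p, hp⟩ := y.2
        refine ⟨p, ?_, Subtype.ext ?_⟩
        · show p ∈ LinearMap.ker f
          rw [LinearMap.mem_ker, hkf, hp]
          simpa using hy
        · simpa using hp
    rw [← key]
    exact isPSD_map_s13 h.rangeRestrict h.surjective_rangeRestrict hPSD
end

section
/- Let I be an ideal of R and P a projective left R-module that is PSD for I. If P is I-semiperfect, then P is I-supplemented. -/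
open Submodule Function

theorem stmt15 {R P : Type*} [Ring R] [AddCommGroup P] [Module R P]
    (I : Ideal R) (hp : Module.Projective R P)
    (hpsd : ∀ N : Submodule R P, N ≤ I • (⊤ : Submodule R P) → IsPSD R N)
    (hsp : ∀ K : Submodule R P, ∃ A B : Submodule R P, IsCompl A B ∧
      Module.Projective R ↥A ∧ A ≤ K ∧ K ⊓ B ≤ I • (⊤ : Submodule R P)) :
    IsISupplemented I P := by
  intro X
  obtain ⟨A, B, hAB, hAproj, hAX, hKB⟩ := hsp X
  refine ⟨B, ?_, ?_, ?_⟩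
  · -- X ⊔ B = ⊤
    rw [eq_top_iff, ← hAB.sup_eq_top]
    exact sup_le_sup_right hAX B
  · -- X ⊓ B ≤ I • B
    intro x hx
    have hxB : x ∈ B := hx.2
    have hxI : x ∈ I • (⊤ : Submodule R P) := hKB hx
    have htop : I • (⊤ : Submodule R P) = I • A ⊔ I • B := by
      rw [← Submodule.smul_sup, hAB.sup_eq_top]
    rw [htop] at hxI
    obtain ⟨a, ha, b, hb, hab⟩ := Submodule.mem_sup.mp hxI
    have haA : a ∈ A := Submodule.smul_le.mpr (fun r _ m hm => A.smul_mem r hm) ha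
    have hbB : b ∈ B := Submodule.smul_le.mpr (fun r _ m hm => B.smul_mem r hm) hb
    have haB : a ∈ B := by
      have : a = x - b := by rw [← hab]; abel
      rw [this]; exact B.sub_mem hxB hbB
    have : a = 0 := by
      have := hAB.disjoint.le_bot ⟨haA, haB⟩
      simpa using this
    rw [← hab, this, zero_add]
    exact hb
  · -- PSD
    intro Z hZ
    set Z' : Submodule R P := Submodule.map B.subtype Z with hZ'def
    have hZ'B : Z' ≤ B := Submodule.map_subtype_le B Z
    have hNZ' : (X ⊓ B) ⊔ Z' = B := by
      have := congrArg (Submodule.map B.subtype) hZ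
      rwa [Submodule.map_sup, Submodule.map_comap_subtype, Submodule.map_top,
        Submodule.range_subtype, inf_comm B X] at this
    have hNI : X ⊓ B ≤ I • (⊤ : Submodule R P) := hKB
    have hsuptop : (X ⊓ B) ⊔ (Z' ⊔ A) = ⊤ := by
      rw [← sup_assoc, hNZ', sup_comm]
      exact hAB.sup_eq_top
    obtain ⟨S, hSN, hSproj, hScompl⟩ := hpsd (X ⊓ B) hNI (Z' ⊔ A) hsuptop
    have hSB : S ≤ B := hSN.trans inf_le_right
    have hSZ'B : S ⊔ Z' = B := by
      have h1 : S ⊔ Z' ⊔ A = ⊤ := by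
        rw [sup_assoc]; exact hScompl.sup_eq_top
      have h2 := inf_sup_assoc_of_le (x := B) A (sup_le hSB hZ'B)
      rw [hAB.symm.disjoint.eq_bot, bot_sup_eq, sup_comm A, h1, inf_top_eq] at h2
      exact h2
    have hSZ'disj : S ⊓ Z' = ⊥ := by
      have : S ⊓ Z' ≤ S ⊓ (Z' ⊔ A) := inf_le_inf_left S le_sup_left
      rw [hScompl.disjoint.eq_bot] at this
      exact le_bot_iff.mp this
    refine ⟨Submodule.comap B.subtype S, ?_, ?_, ?_⟩
    · exact fun x hx => (hSN hx).1
    · exact Module.Projective.of_equiv (Submodule.comapSubtypeEquivOfLe hSB).symm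
    · refine ⟨disjoint_iff.mpr ?_, ?_⟩
      · apply eq_bot_iff.mpr
        rintro x ⟨hx1, hx2⟩
        have hmem : (x : P) ∈ S ⊓ Z' := ⟨hx1, ⟨x, hx2, rfl⟩⟩
        rw [hSZ'disj] at hmem
        simp only [Submodule.mem_bot] at hmem ⊢
        exact Subtype.ext hmem
      · rw [codisjoint_iff, eq_top_iff]
        intro x _
        obtain ⟨b, hb⟩ := x
        have : b ∈ S ⊔ Z' := hSZ'B ▸ hb
        obtain ⟨s, hs, z, hz, hsz⟩ := Submodule.mem_sup.mp this
        obtain ⟨z₀, hz₀, rfl⟩ := hz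
        refine Submodule.mem_sup.mpr ⟨⟨s, hSB hs⟩, hs, z₀, hz₀, ?_⟩
        exact Subtype.ext hsz
end

section
/- Let M be a projective left R-module with Rad(M) small in M. Then M is supplemented if and only if M is lifting. -/
open Submodule Function

section Aux

variable {R : Type*} [Ring R]

lemma small_mono {M : Type*} [AddCommGroup M] [Module R M] {K K' : Submodule R M}
    (h : IsSmallSub R K) (hle : K' ≤ K) : IsSmallSub R K' := by
  intro L hL
  apply h
  rw [eq_top_iff, ← hL]
  exact sup_le_sup_right hle L

lemma small_sup {M : Type*} [AddCommGroup M] [Module R M] {K₁ K₂ : Submodule R M}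
    (h₁ : IsSmallSub R K₁) (h₂ : IsSmallSub R K₂) : IsSmallSub R (K₁ ⊔ K₂) := by
  intro L hL
  apply h₂
  apply h₁
  rw [← sup_assoc]
  exact hL

lemma smallSub_map {A B : Type*} [AddCommGroup A] [Module R A]
    [AddCommGroup B] [Module R B] (f : A →ₗ[R] B) {K : Submodule R A}
    (h : IsSmallSub R K) : IsSmallSub R (K.map f) := by
  intro L hL
  have h2 : K ⊔ L.comap f = ⊤ := by
    rw [eq_top_iff]
    intro a _
    have ha : f a ∈ K.map f ⊔ L := by rw [hL]; trivial
    obtain ⟨b, hb, c, hc, hbc⟩ := mem_sup.mp ha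
    obtain ⟨k, hk, rfl⟩ := hb
    refine mem_sup.mpr ⟨k, hk, a - k, ?_, by abel⟩
    have hfa : f (a - k) = c := by rw [map_sub]; rw [← hbc]; abel
    simpa [mem_comap, hfa] using hc
  have h3 := h _ h2
  rw [eq_top_iff, ← hL]
  refine sup_le ?_ le_rfl
  rintro b ⟨k, _, rfl⟩
  have : k ∈ L.comap f := by rw [h3]; trivial
  exact this

/-- π-projectivity from projectivity: if `N ⊔ Y = ⊤` there is `f` with image in `N`
and `1 - f` with image in `Y`. -/
lemma pi_proj {M : Type*} [AddCommGroup M] [Module R M]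
    (hp : Module.Projective R M) {N Y : Submodule R M} (hNY : N ⊔ Y = ⊤) :
    ∃ f : M →ₗ[R] M, (∀ m, f m ∈ N) ∧ (∀ m, m - f m ∈ Y) := by
  haveI := hp
  have hsurj : Surjective (LinearMap.coprod N.subtype Y.subtype) := by
    rw [← LinearMap.range_eq_top, LinearMap.range_coprod, range_subtype, range_subtype, hNY]
  obtain ⟨s, hs⟩ := Module.projective_lifting_property _ LinearMap.id hsurj
  refine ⟨N.subtype ∘ₗ (LinearMap.fst R N Y) ∘ₗ s, fun m => (s m).1.2, fun m => ?_⟩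
  have hm : ((s m).1 : M) + ((s m).2 : M) = m := by
    have := LinearMap.congr_fun hs m
    simpa [LinearMap.coprod_apply] using this
  have h2 : m - ((s m).1 : M) = ((s m).2 : M) := sub_eq_of_eq_add' hm.symm
  show m - ((s m).1 : M) ∈ Y
  rw [h2]; exact (s m).2.2

/-- Mutual supplements in a projective module are complements. -/
lemma compl_of_mutual {M : Type*} [AddCommGroup M] [Module R M]
    (hp : Module.Projective R M) {X Y : Submodule R M} (hXY : X ⊔ Y = ⊤)
    (hX : IsSmallSub R (comap X.subtype Y)) (hY : IsSmallSub R (comap Y.subtype X)) :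
    IsCompl X Y := by
  haveI := hp
  set π : (↥X × ↥Y) →ₗ[R] M := LinearMap.coprod X.subtype Y.subtype with hπdef
  have hsurj : Surjective π := by
    rw [← LinearMap.range_eq_top, hπdef, LinearMap.range_coprod, range_subtype,
      range_subtype, hXY]
  obtain ⟨s, hs⟩ := Module.projective_lifting_property π LinearMap.id hsurj
  have hπs : ∀ m, π (s m) = m := fun m => LinearMap.congr_fun hs m
  -- the kernel of π is small
  have hker : IsSmallSub R (LinearMap.ker π) := by
    have h1 := smallSub_map (LinearMap.inl R ↥X ↥Y) hX
    have h2 := smallSub_map (LinearMap.inr R ↥X ↥Y) hY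
    apply small_mono (small_sup h1 h2)
    rintro ⟨x, y⟩ hxy
    have hxy' : (x : M) + (y : M) = 0 := hxy
    have hx : (x : M) ∈ Y := by
      rw [eq_neg_of_add_eq_zero_left hxy']; exact neg_mem y.2
    have hy : (y : M) ∈ X := by
      rw [eq_neg_of_add_eq_zero_right hxy']; exact neg_mem x.2
    have : (⟨x, y⟩ : ↥X × ↥Y) = (⟨x, 0⟩ : ↥X × ↥Y) + ⟨0, y⟩ := by
      ext <;> simp
    rw [this]
    exact add_mem_sup ⟨x, hx, rfl⟩ ⟨y, hy, rfl⟩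
  -- range of s is everything
  have hrange : LinearMap.range s = ⊤ := by
    apply hker
    rw [eq_top_iff]
    intro a _
    have h1 : a - s (π a) ∈ LinearMap.ker π := by
      simp [LinearMap.mem_ker, map_sub, hπs]
    have h2 : s (π a) ∈ LinearMap.range s := ⟨π a, rfl⟩
    have : a = (a - s (π a)) + s (π a) := by abel
    rw [this]
    exact add_mem_sup h1 h2
  constructor
  · rw [disjoint_iff]
    rw [eq_bot_iff]
    rintro w ⟨hwX, hwY⟩
    set a : ↥X × ↥Y := (⟨w, hwX⟩, ⟨-w, neg_mem hwY⟩) with hadef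
    have haker : π a = 0 := by
      show (w : M) + (-w) = 0
      abel
    obtain ⟨m, hm⟩ : a ∈ LinearMap.range s := by rw [hrange]; trivial
    have hm0 : m = 0 := by
      have := hπs m
      rw [hm, haker] at this
      exact this.symm
    have : a = 0 := by rw [← hm, hm0, map_zero]
    have : (⟨w, hwX⟩ : ↥X) = 0 := congrArg Prod.fst this
    simpa using congrArg Subtype.val this
  · exact codisjoint_iff.mpr hXY

end Aux

theorem stmt16 {R M : Type*} [Ring R] [AddCommGroup M] [Module R M]
    (hp : Module.Projective R M) (hr : IsSmallSub R (radM R M)) :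
    IsSupplemented R M ↔ IsLifting R M := by
  constructor
  · intro hsupp N
    obtain ⟨Y, hNY, hNsmall⟩ := hsupp N
    obtain ⟨X', hYX', hX'small⟩ := hsupp Y
    obtain ⟨f, hfN, hfY⟩ := pi_proj hp hNY
    set X : Submodule R M := X'.map f with hXdef
    have hXleN : X ≤ N := by
      rintro _ ⟨x', _, rfl⟩
      exact hfN x'
    have hXY : X ⊔ Y = ⊤ := by
      rw [eq_top_iff]
      intro m _
      have hm : m ∈ Y ⊔ X' := by rw [hYX']; trivial
      obtain ⟨y, hy, x', hx', rfl⟩ := mem_sup.mp hm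
      have : y + x' = f x' + (y + (x' - f x')) := by abel
      rw [this]
      exact add_mem_sup (mem_map_of_mem hx') (add_mem hy (hfY x'))
    have hfmem : ∀ x ∈ X', f x ∈ X := fun x hx => mem_map_of_mem hx
    set f' : ↥X' →ₗ[R] ↥X := f.restrict hfmem with hf'def
    have hXsmall : IsSmallSub R (comap X.subtype Y) := by
      apply small_mono (smallSub_map f' hX'small)
      rintro ⟨ξ, hξ⟩ hmem
      have hmem' : ξ ∈ Y := hmem
      obtain ⟨x', hx', hfx'⟩ := hξ
      have hx'Y : x' ∈ Y := by
        have : x' = ξ + (x' - f x') := by rw [hfx']; abel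
        rw [this]
        exact add_mem hmem' (hfY x')
      refine ⟨⟨x', hx'⟩, hx'Y, ?_⟩
      exact Subtype.ext hfx'
    have hYsmallX : IsSmallSub R (comap Y.subtype X) :=
      small_mono hNsmall (comap_mono hXleN)
    exact ⟨X, Y, compl_of_mutual hp hXY hXsmall hYsmallX, hXleN, hNsmall⟩
  · intro hl X
    obtain ⟨A, B, hc, hA, hs⟩ := hl X
    refine ⟨B, ?_, hs⟩
    rw [eq_top_iff, ← hc.sup_eq_top]
    exact sup_le_sup_right hA B
end

section
/- Let I be an ideal of R. If the left regular module R is I-supplemented and R is a left PSD ring for I, then every finitely generated left R-module is I-supplemented. -/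
/-!
PSD submodules are stable under passing to smaller submodules (a projective complement of `Z`
lifts into the smaller submodule along the projection onto it), under linear images and under
finite sums. Hence an `I`-supplement of `X.comap f` maps to an `I`-supplement of `X` whenever
`X + range f = M`, and if `Y₁` is an `I`-supplement of `X + Y₂` and `Y₂` one of `X + Y₁`, then
`Y₁ + Y₂` is one of `X`. The first fact settles cyclic modules via `r ↦ r • x : R → M`, where the
hypothesis on `R` applies; the second is the induction step over a finite generating set.
-/

open Submodule Function

section IsPSD

variable {R : Type*} [Ring R] {V W W' : Type*} [AddCommGroup V] [Module R V]
  [AddCommGroup W] [Module R W] [AddCommGroup W'] [Module R W']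

theorem LinearMap.isCompl_range_ker_of_comp_eq_id_s17 {π : W →ₗ[R] V} {j : V →ₗ[R] W}
    (h : π ∘ₗ j = LinearMap.id) : IsCompl (LinearMap.range j) (LinearMap.ker π) := by
  have hj : LinearMap.ker j = ⊥ := LinearMap.ker_eq_bot_of_inverse h
  have hproj : ∀ x : LinearMap.range j, j.rangeRestrict (π x) = x := by
    rintro ⟨_, s, rfl⟩
    ext
    simp [← LinearMap.comp_apply, h]
  simpa [LinearMap.ker_comp, LinearMap.ker_rangeRestrict, hj] using
    LinearMap.isCompl_of_proj (f := j.rangeRestrict ∘ₗ π) hproj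

theorem Module.Projective.sup_of_disjoint {S₁ S₂ : Submodule R W} [Module.Projective R S₁]
    [Module.Projective R S₂] (h : Disjoint S₁ S₂) : Module.Projective R ↥(S₁ ⊔ S₂) := by
  have hinj : Function.Injective (S₁.subtype.coprod S₂.subtype) := by
    rw [← LinearMap.ker_eq_bot, LinearMap.ker_coprod_of_disjoint_range _ _ (by simpa using h)]
    simp
  exact .of_equiv ((LinearEquiv.ofInjective _ hinj).trans (.ofEq _ _ (sup_eq_range S₁ S₂).symm))

theorem IsPSD.anti {N N' : Submodule R W} (h : IsPSD R N) (hle : N' ≤ N) : IsPSD R N' := by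
  intro Z hZ
  obtain ⟨S, -, hS, hSZ⟩ := h Z (top_unique (hZ ▸ sup_le_sup_right hle Z))
  let π := S.projectionOnto Z hSZ
  have hπ : Surjective (π ∘ₗ N'.subtype) := by
    intro s
    obtain ⟨n, hn, z, hz, hnz⟩ := mem_sup.mp (hZ ▸ mem_top : (s : W) ∈ N' ⊔ Z)
    refine ⟨⟨n, hn⟩, ?_⟩
    have : π (n + z) = s := by rw [hnz]; exact projectionOnto_apply_left hSZ s
    simpa [π, projectionOnto_apply_of_mem_right hSZ hz] using this
  obtain ⟨σ, hσ⟩ := Module.projective_lifting_property _ LinearMap.id hπ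
  have hj : π ∘ₗ (N'.subtype ∘ₗ σ) = LinearMap.id := hσ
  refine ⟨LinearMap.range (N'.subtype ∘ₗ σ), ?_, ?_, ?_⟩
  · rw [LinearMap.range_comp]
    exact map_subtype_le _ _
  · exact .of_equiv (LinearEquiv.ofInjective _ (LinearMap.ker_eq_bot.mp
      (LinearMap.ker_eq_bot_of_inverse hj)))
  · simpa [π, ker_projectionOnto] using LinearMap.isCompl_range_ker_of_comp_eq_id_s17 hj

theorem IsPSD.map {N : Submodule R W} (h : IsPSD R N) (f : W →ₗ[R] W') : IsPSD R (N.map f) := by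
  intro X hX
  have hNX : N ⊔ X.comap f = ⊤ := by
    refine eq_top_iff.mpr fun w _ => ?_
    obtain ⟨_, ⟨n, hn, rfl⟩, x, hx, hnx⟩ := mem_sup.mp (hX ▸ mem_top : f w ∈ N.map f ⊔ X)
    exact mem_sup.mpr ⟨n, hn, w - n, by simpa [← hnx] using hx, add_sub_cancel _ _⟩
  obtain ⟨S, hSN, hS, hSX⟩ := h _ hNX
  have hinj : Injective (f ∘ₗ S.subtype) := by
    rw [← LinearMap.ker_eq_bot, eq_bot_iff]
    intro s hs
    have : f s = 0 := hs
    exact Subtype.ext (disjoint_def.mp hSX.disjoint s s.2 (by simp [this]))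
  refine ⟨S.map f, map_mono hSN, .of_equiv ((LinearEquiv.ofInjective _ hinj).trans
    (.ofEq _ _ (by rw [LinearMap.range_comp, range_subtype]))), ?_, ?_⟩
  · rw [disjoint_def]
    rintro _ ⟨s, hs, rfl⟩ hsX
    rw [disjoint_def.mp hSX.disjoint s hs hsX, map_zero]
  · refine codisjoint_iff.mpr (top_unique (hX ▸ sup_le ?_ le_sup_right))
    calc N.map f ≤ (S ⊔ X.comap f).map f := map_mono (hSX.sup_eq_top ▸ le_top)
      _ = S.map f ⊔ (X.comap f).map f := Submodule.map_sup ..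
      _ ≤ S.map f ⊔ X := sup_le_sup_left (map_comap_le f X) _

theorem IsPSD.sup {N₁ N₂ : Submodule R W} (h₁ : IsPSD R N₁) (h₂ : IsPSD R N₂) :
    IsPSD R (N₁ ⊔ N₂) := by
  intro Z hZ
  obtain ⟨S₁, hS₁N, hS₁, hS₁Z⟩ := h₁ (N₂ ⊔ Z) (by rwa [← sup_assoc])
  obtain ⟨S₂, hS₂N, hS₂, hS₂Z⟩ := h₂ (S₁ ⊔ Z) (by rw [sup_left_comm]; exact hS₁Z.sup_eq_top)
  refine ⟨S₁ ⊔ S₂, sup_le_sup hS₁N hS₂N,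
    Module.Projective.sup_of_disjoint (hS₂Z.disjoint.mono_right le_sup_left).symm, ?_, ?_⟩
  · rw [sup_comm]
    exact (hS₁Z.disjoint.mono_right le_sup_right).disjoint_sup_left_of_disjoint_sup_right
      hS₂Z.disjoint
  · rw [codisjoint_iff, sup_comm S₁, sup_assoc]
    exact hS₂Z.sup_eq_top

end IsPSD

namespace IsISupplementOf

variable {R : Type*} [Ring R] {I : Ideal R} {M P : Type*} [AddCommGroup M] [Module R M]
  [AddCommGroup P] [Module R P]

theorem map {f : P →ₗ[R] M} {X : Submodule R M} {Y : Submodule R P}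
    (hf : X ⊔ LinearMap.range f = ⊤) (h : IsISupplementOf I Y (X.comap f)) :
    IsISupplementOf I (Y.map f) X := by
  obtain ⟨hsup, hle, hpsd⟩ := h
  refine ⟨top_unique (hf ▸ sup_le le_sup_left ?_), ?_, ?_⟩
  · rw [LinearMap.range_eq_map, ← hsup, Submodule.map_sup]
    exact sup_le_sup_right (map_comap_le f X) _
  · rintro _ ⟨hyX, y, hy, rfl⟩
    rw [← map_smul'']
    exact mem_map_of_mem (hle ⟨hyX, hy⟩)
  · have : X.comap (Y.map f).subtype = ((X.comap f).comap Y.subtype).map (f.submoduleMap Y) := by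
      rw [← map_comap_eq_of_surjective (f.submoduleMap_surjective Y) (X.comap _)]
      rfl
    rw [this]
    exact hpsd.map _

theorem of_le {X X' Y : Submodule R M} (h : IsISupplementOf I Y X') (hle : X ≤ X')
    (hsup : X ⊔ Y = ⊤) : IsISupplementOf I Y X :=
  ⟨hsup, (inf_le_inf_right Y hle).trans h.2.1, h.2.2.anti (comap_mono hle)⟩

theorem sup {X Y₁ Y₂ : Submodule R M} (h₁ : IsISupplementOf I Y₁ (X ⊔ Y₂))
    (h₂ : IsISupplementOf I Y₂ (X ⊔ Y₁)) : IsISupplementOf I (Y₁ ⊔ Y₂) X := by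
  have split : ∀ y ∈ Y₁ ⊔ Y₂, y ∈ X →
      ∃ y₁ ∈ (X ⊔ Y₂) ⊓ Y₁, ∃ y₂ ∈ (X ⊔ Y₁) ⊓ Y₂, y₁ + y₂ = y := by
    intro y hy hyX
    obtain ⟨y₁, hy₁, y₂, hy₂, rfl⟩ := mem_sup.mp hy
    refine ⟨y₁, ⟨?_, hy₁⟩, y₂, ⟨?_, hy₂⟩, rfl⟩
    · simpa using sub_mem (mem_sup_left hyX) (mem_sup_right hy₂ : y₂ ∈ X ⊔ Y₂)
    · simpa using sub_mem (mem_sup_left hyX) (mem_sup_right hy₁ : y₁ ∈ X ⊔ Y₁)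
  refine ⟨by rw [← sup_assoc, sup_right_comm]; exact h₁.1, ?_, ?_⟩
  · rintro y ⟨hyX, hy⟩
    obtain ⟨y₁, hy₁, y₂, hy₂, rfl⟩ := split y hy hyX
    rw [smul_sup]
    exact add_mem_sup (h₁.2.1 hy₁) (h₂.2.1 hy₂)
  · refine ((h₁.2.2.map (inclusion le_sup_left)).sup (h₂.2.2.map (inclusion le_sup_right))).anti ?_
    rintro ⟨y, hy⟩ hyX
    obtain ⟨y₁, ⟨hy₁X, hy₁⟩, y₂, ⟨hy₂X, hy₂⟩, rfl⟩ := split y hy hyX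
    have hy₁' : (⟨y₁, mem_sup_left hy₁⟩ : ↥(Y₁ ⊔ Y₂)) ∈
        ((X ⊔ Y₂).comap Y₁.subtype).map (inclusion le_sup_left) := ⟨⟨y₁, hy₁⟩, hy₁X, rfl⟩
    have hy₂' : (⟨y₂, mem_sup_right hy₂⟩ : ↥(Y₁ ⊔ Y₂)) ∈
        ((X ⊔ Y₁).comap Y₂.subtype).map (inclusion le_sup_right) := ⟨⟨y₂, hy₂⟩, hy₂X, rfl⟩
    exact add_mem_sup hy₁' hy₂'

end IsISupplementOf

theorem exists_isISupplementOf_le_of_fg {R : Type*} [Ring R] {I : Ideal R}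
    (hR : IsISupplemented I R) {M : Type*} [AddCommGroup M] [Module R M]
    {N : Submodule R M} (hN : N.FG) (X : Submodule R M) (hX : X ⊔ N = ⊤) :
    ∃ Y ≤ N, IsISupplementOf I Y X := by
  induction N, hN using fg_induction generalizing X with
  | singleton x =>
    obtain ⟨Y, hY⟩ := hR (X.comap (LinearMap.toSpanSingleton R M x))
    rw [← LinearMap.range_toSpanSingleton] at hX ⊢
    exact ⟨Y.map _, LinearMap.map_le_range, hY.map hX⟩
  | sup N₁ N₂ _ _ ih₁ ih₂ =>
    obtain ⟨Y₁, hY₁N, hY₁⟩ := ih₁ (X ⊔ N₂) (by rwa [sup_right_comm, sup_assoc])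
    obtain ⟨Y₂, hY₂N, hY₂⟩ := ih₂ (X ⊔ Y₁) (by rw [sup_right_comm]; exact hY₁.1)
    refine ⟨Y₁ ⊔ Y₂, sup_le_sup hY₁N hY₂N, (hY₁.of_le (sup_le_sup_left hY₂N X) ?_).sup hY₂⟩
    rw [sup_right_comm]
    exact hY₂.1

theorem stmt17_general {R : Type*} [Ring R] (I : Ideal R)
    (hR : IsISupplemented I R) :
    ∀ (M : Type*) [AddCommGroup M] [Module R M], Module.Finite R M →
      IsISupplemented I M := by
  intro M _ _ hfin X
  obtain ⟨Y, -, hY⟩ := exists_isISupplementOf_le_of_fg hR hfin.fg_top X (sup_top_eq X)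
  exact ⟨Y, hY⟩

theorem stmt17 {R : Type*} [Ring R] (I : Ideal R)
    (hR : IsISupplemented I R)
    (hpsd : ∀ n : ℕ, ∀ N : Submodule R (Fin n → R),
      N ≤ I • (⊤ : Submodule R (Fin n → R)) → IsPSD R N) :
    ∀ (M : Type*) [AddCommGroup M] [Module R M], Module.Finite R M →
      IsISupplemented I M :=
  stmt17_general I hR
end

section
/- A ring R is semiperfect if and only if the left regular module R is supplemented. -/
open Submodule Function

/-- `R` is semiperfect: `R/J(R)` is semisimple and idempotents lift modulo `J(R)`. -/
def IsSemiperfectRing (R : Type*) [Ring R] : Prop :=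
  IsSemisimpleModule R (R ⧸ Ideal.jacobson (⊥ : Ideal R)) ∧
    ∀ r : R, r * r - r ∈ Ideal.jacobson (⊥ : Ideal R) →
      ∃ e : R, IsIdempotentElem e ∧ e - r ∈ Ideal.jacobson (⊥ : Ideal R)

/-! If `R` is supplemented, a supplement `Y` of the preimage of a submodule of `R/J` meets it
in a small, hence radical, left ideal, so the image of `Y` is a complement. If moreover
`r² - r ∈ J`, moving a supplement of `Rr` by right multiplication with `1 - r`, and then a
supplement of the result by right multiplication with the `Rr`-component of `1`, yields mutual
supplements `X ≤ Rr` and `Y ≤ R(1 - r)`. As `R` is projective they are complements, and the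
`X`-component of `1` is an idempotent lifting `r`.

Conversely, a complement of `X̄` in `R/J` is generated by an idempotent modulo `J`; its lift `e`
gives the supplement `Re` of `X`, because `X ∩ Re ≤ J` is small in `R` and hence in the direct
summand `Re`. -/

section Small

variable {R M N : Type*} [Ring R] [AddCommGroup M] [Module R M] [AddCommGroup N] [Module R N]

theorem IsSmallSub.mono {K K' : Submodule R M} (hK : IsSmallSub R K) (h : K' ≤ K) :
    IsSmallSub R K' := fun L hL =>
  hK L (top_unique (hL ▸ sup_le_sup_right h L))

theorem IsSmallSub.sup {K K' : Submodule R M} (hK : IsSmallSub R K) (hK' : IsSmallSub R K') :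
    IsSmallSub R (K ⊔ K') := fun L hL =>
  hK' L (hK (K' ⊔ L) (by rwa [← sup_assoc]))

theorem IsSmallSub.map {K : Submodule R M} (hK : IsSmallSub R K) (f : M →ₗ[R] N) :
    IsSmallSub R (K.map f) := by
  intro L hL
  have hcomap : K ⊔ L.comap f = ⊤ := eq_top_iff.2 fun x _ => by
    obtain ⟨_, ⟨k, hk, rfl⟩, l, hl, hkl⟩ := mem_sup.1 (hL ▸ mem_top : f x ∈ K.map f ⊔ L)
    exact mem_sup.2 ⟨k, hk, x - k, by simp [← hkl, hl], by abel⟩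
  have hKL : K.map f ≤ L := map_le_iff_le_comap.2 (hK _ hcomap ▸ le_top)
  rwa [sup_eq_right.2 hKL] at hL

theorem IsSmallSub.prod {K : Submodule R M} {K' : Submodule R N} (hK : IsSmallSub R K)
    (hK' : IsSmallSub R K') : IsSmallSub R (K.prod K') := by
  rw [LinearMap.prod_eq_sup_map]
  exact (hK.map _).sup (hK'.map _)

theorem IsSmallSub.comap_subtype_of_isCompl {K Y Z : Submodule R M} (hK : IsSmallSub R (K ⊓ Y))
    (hYZ : IsCompl Y Z) : IsSmallSub R (K.comap Y.subtype) := by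
  intro L hL
  set L' := L.map Y.subtype
  have hKL' : K ⊓ Y ⊔ L' = Y := by
    simpa [L', Submodule.map_sup, map_comap_subtype, inf_comm] using
      congrArg (Submodule.map Y.subtype) hL
  have hL'Z : L' ⊔ Z = ⊤ := hK _ <| by rw [← sup_assoc, hKL', hYZ.sup_eq_top]
  have hYL' : Y = L' :=
    calc Y = (L' ⊔ Z) ⊓ Y := by rw [hL'Z, top_inf_eq]
      _ = L' ⊔ Z ⊓ Y := sup_inf_assoc_of_le Z (map_subtype_le Y L)
      _ = L' := by rw [hYZ.symm.inf_eq_bot, sup_bot_eq]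
  rw [← comap_map_eq_of_injective Y.injective_subtype L]
  exact comap_subtype_eq_top.2 hYL'.le

/-- Over a projective module a surjection with small kernel splits, and the splitting is onto. -/
theorem LinearMap.ker_eq_bot_of_isSmallSub [Module.Projective R N] {f : M →ₗ[R] N}
    (hf : Surjective f) (hker : IsSmallSub R (ker f)) : ker f = ⊥ := by
  obtain ⟨s, hs⟩ := Module.projective_lifting_property f LinearMap.id hf
  have hfs (n : N) : f (s n) = n := LinearMap.congr_fun hs n
  have hs_range : range s = ⊤ := hker _ <| eq_top_iff.2 fun m _ =>
    mem_sup.2 ⟨m - s (f m), by simp [hfs], s (f m), mem_range_self s _, sub_add_cancel _ _⟩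
  refine eq_bot_iff.2 fun m hm => ?_
  obtain ⟨n, rfl⟩ := mem_range.1 (hs_range ▸ mem_top : m ∈ range s)
  rw [mem_ker, hfs] at hm
  simp [hm]

end Small

section Supplement

variable {R M : Type*} [Ring R] [AddCommGroup M] [Module R M]

def IsSupplementOf (Y X : Submodule R M) : Prop :=
  X ⊔ Y = ⊤ ∧ IsSmallSub R (X.comap Y.subtype)

theorem IsSupplementOf.isSmallSub_inf {X Y : Submodule R M} (h : IsSupplementOf Y X) :
    IsSmallSub R (X ⊓ Y) := by
  simpa [map_comap_subtype, inf_comm] using h.2.map Y.subtype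

theorem IsSupplementOf.of_le {X X' Y : Submodule R M} (h : IsSupplementOf Y X') (hX : X ≤ X')
    (hXY : X ⊔ Y = ⊤) : IsSupplementOf Y X :=
  ⟨hXY, h.2.mono (comap_mono hX)⟩

theorem IsSupplementOf.map {X Y : Submodule R M} (h : IsSupplementOf Y X) {f : M →ₗ[R] M}
    (hf : ∀ m, m - f m ∈ X) : IsSupplementOf (Y.map f) X := by
  have hfX (m : M) (hm : f m ∈ X) : m ∈ X := by simpa using add_mem (hf m) hm
  refine ⟨eq_top_iff.2 fun m _ => ?_, h.2.map (f.restrict fun _ => mem_map_of_mem) |>.mono ?_⟩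
  · obtain ⟨x, hx, y, hy, rfl⟩ := mem_sup.1 (h.1 ▸ mem_top : m ∈ X ⊔ Y)
    exact mem_sup.2 ⟨x + (y - f y), add_mem hx (hf y), f y, mem_map_of_mem hy, by abel⟩
  · rintro ⟨_, y, hy, rfl⟩ hfy
    exact ⟨⟨y, hy⟩, hfX y hfy, rfl⟩

theorem IsSupplementOf.isCompl [Module.Projective R M] {X Y : Submodule R M}
    (hY : IsSupplementOf Y X) (hX : IsSupplementOf X Y) : IsCompl X Y := by
  set ρ := X.subtype.coprod Y.subtype
  have hρ : Surjective ρ := by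
    rw [← LinearMap.range_eq_top, LinearMap.range_coprod, range_subtype, range_subtype, hY.1]
  have hker : LinearMap.ker ρ ≤ (Y.comap X.subtype).prod (X.comap Y.subtype) := by
    rintro ⟨u, v⟩ (huv : (u : M) + v = 0)
    exact ⟨by simp [eq_neg_of_add_eq_zero_left huv], by simp [eq_neg_of_add_eq_zero_right huv]⟩
  have hker_bot := LinearMap.ker_eq_bot_of_isSmallSub hρ ((hX.2.prod hY.2).mono hker)
  refine ⟨disjoint_iff.2 (eq_bot_iff.2 fun z ⟨hzX, hzY⟩ => ?_), codisjoint_iff.2 hY.1⟩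
  have hz : (⟨⟨z, hzX⟩, ⟨-z, neg_mem hzY⟩⟩ : X × Y) ∈ LinearMap.ker ρ := by simp [ρ]
  rw [hker_bot, mem_bot] at hz
  simpa using congrArg (fun p : X × Y => (p.1 : M)) hz

theorem isSemisimpleModule_quotient_of_isSupplemented (hs : IsSupplemented R M)
    {N : Submodule R M} (hN : ∀ K : Submodule R M, IsSmallSub R K → K ≤ N) :
    IsSemisimpleModule R (M ⧸ N) where
  exists_isCompl W := by
    obtain ⟨Y, hY⟩ : ∃ Y, IsSupplementOf Y (W.comap N.mkQ) := hs _
    refine ⟨Y.map N.mkQ, disjoint_iff.2 (eq_bot_iff.2 ?_), codisjoint_iff.2 ?_⟩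
    · rintro _ ⟨hyW, y, hy, rfl⟩
      exact (Quotient.mk_eq_zero N).2 (hN _ hY.isSmallSub_inf ⟨hyW, hy⟩)
    · rw [← map_comap_eq_of_surjective N.mkQ_surjective W, ← Submodule.map_sup, hY.1,
        Submodule.map_top, range_mkQ]

end Supplement

section Ring

variable {R : Type*} [Ring R]

theorem le_jacobson_bot_of_isSmallSub {I : Ideal R} (hI : IsSmallSub R I) :
    I ≤ Ideal.jacobson ⊥ := by
  refine le_sInf fun m ⟨_, hm⟩ => ?_
  by_contra hIm
  exact hm.ne_top (hI m (by rw [sup_comm]; exact hm.1.2 _ (left_lt_sup.2 hIm)))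

theorem isSmallSub_jacobson_bot : IsSmallSub R (Ideal.jacobson (⊥ : Ideal R)) := by
  intro L hL
  by_contra hL_ne
  obtain ⟨m, hm, hLm⟩ := Ideal.exists_le_maximal L hL_ne
  exact hm.ne_top (top_unique (hL ▸ sup_le (sInf_le ⟨bot_le, hm⟩) hLm))

theorem isIdempotentElem_projection_one {X Y : Submodule R R} (h : IsCompl X Y) :
    IsIdempotentElem (X.projection Y h 1) := by
  have h_smul := (X.projection Y h).map_smul (X.projection Y h 1) 1
  rwa [smul_eq_mul, mul_one, projection_apply_of_mem_left h (projection_apply_mem h 1),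
    smul_eq_mul, eq_comm] at h_smul

theorem sub_eq_mul_mul_self_sub {r e a b : R} (ha : e = a * r) (hb : 1 - e = b * (1 - r)) :
    e - r = (b - a) * (r * r - r) :=
  calc e - r = e * (1 - r) - (1 - e) * r := by noncomm_ring
    _ = (b - a) * (r * r - r) := by rw [hb, ha]; noncomm_ring

theorem exists_isIdempotentElem_sub_mem_jacobson_of_isSupplemented (hs : IsSupplemented R R)
    {r : R} (hr : r * r - r ∈ Ideal.jacobson (⊥ : Ideal R)) :
    ∃ e : R, IsIdempotentElem e ∧ e - r ∈ Ideal.jacobson (⊥ : Ideal R) := by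
  obtain ⟨Y₀, hY₀⟩ : ∃ Y, IsSupplementOf Y (R ∙ r) := hs _
  set Y := Y₀.map (LinearMap.toSpanSingleton R R (1 - r))
  have hY : IsSupplementOf Y (R ∙ r) := hY₀.map fun m => by
    simpa [mul_sub] using smul_mem _ m (mem_span_singleton_self r)
  have hY_le : Y ≤ R ∙ (1 - r) :=
    LinearMap.span_singleton_eq_range R R (1 - r) ▸ LinearMap.map_le_range
  obtain ⟨x, hx, y, hy, hxy⟩ := mem_sup.1 (hY.1 ▸ mem_top : (1 : R) ∈ (R ∙ r) ⊔ Y)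
  obtain ⟨X₀, hX₀⟩ : ∃ X, IsSupplementOf X Y := hs _
  set X := X₀.map (LinearMap.toSpanSingleton R R x)
  have hX : IsSupplementOf X Y := hX₀.map fun m => by
    have hmy : m - m * x = m * y := by rw [← sub_eq_iff_eq_add'.2 hxy.symm]; noncomm_ring
    simpa [hmy] using smul_mem _ m hy
  have hX_le : X ≤ R ∙ r := map_le_iff_le_comap.2 fun m _ => smul_mem _ m hx
  have hXY : IsCompl X Y := (hY.of_le hX_le (sup_comm Y X ▸ hX.1)).isCompl hX
  refine ⟨X.projection Y hXY 1, isIdempotentElem_projection_one hXY, ?_⟩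
  obtain ⟨a, ha⟩ := mem_span_singleton.1 (hX_le (projection_apply_mem hXY 1))
  obtain ⟨b, hb⟩ := mem_span_singleton.1 (hY_le (sub_projection_mem hXY 1))
  rw [sub_eq_mul_mul_self_sub ha.symm hb.symm]
  exact Ideal.mul_mem_left _ _ hr

theorem exists_isIdempotentElem_span_mkQ_eq {I : Ideal R}
    (hlift : ∀ r : R, r * r - r ∈ I → ∃ e : R, IsIdempotentElem e ∧ e - r ∈ I)
    {A C : Submodule R (R ⧸ I)} (h : IsCompl C A) :
    ∃ e : R, IsIdempotentElem e ∧ R ∙ I.mkQ e = C := by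
  set P := C.projection A h
  obtain ⟨g, hg⟩ := I.mkQ_surjective (P (I.mkQ 1))
  have hP (u : R) : P (I.mkQ u) = u • I.mkQ g := by
    rw [hg, ← map_smul, ← map_smul, smul_eq_mul, mul_one]
  have hgC : I.mkQ g ∈ C := hg ▸ projection_apply_mem h _
  obtain ⟨e, he, heg⟩ := hlift g <| (Quotient.mk_eq_zero I).1 <| by
    rw [← mkQ_apply, map_sub, ← smul_eq_mul, map_smul, ← hP, projection_apply_of_mem_left h hgC,
      sub_self]
  refine ⟨e, he, le_antisymm ?_ fun z hz => ?_⟩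
  · rw [span_le, Set.singleton_subset_iff, mkQ_apply, (Submodule.Quotient.eq I).2 heg]
    exact hgC
  · obtain ⟨u, rfl⟩ := I.mkQ_surjective z
    rw [← projection_apply_of_mem_left h hz, hP, mkQ_apply, (Submodule.Quotient.eq I).2 heg]
    exact smul_mem _ u (mem_span_singleton_self _)

theorem IsSemiperfectRing.isSupplemented (h : IsSemiperfectRing R) : IsSupplemented R R := by
  set J := Ideal.jacobson (⊥ : Ideal R)
  intro X
  obtain ⟨C, hC⟩ := h.1.exists_isCompl (X.map J.mkQ)
  obtain ⟨e, he, heC⟩ := exists_isIdempotentElem_span_mkQ_eq h.2 hC.symm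
  have hmap : (R ∙ e).map J.mkQ = C := by rw [map_span, Set.image_singleton, heC]
  have hsup : X ⊔ R ∙ e = ⊤ := isSmallSub_jacobson_bot _ <| by
    rw [← comap_map_mkQ, Submodule.map_sup, hmap, hC.sup_eq_top, comap_top]
  have hinf : X ⊓ R ∙ e ≤ J := by
    rw [← ker_mkQ J, LinearMap.le_ker_iff_map, eq_bot_iff, ← hC.inf_eq_bot, ← hmap]
    exact map_inf_le _
  have he_lin : IsIdempotentElem (LinearMap.toSpanSingleton R R e) :=
    LinearMap.ext fun u => by simp [mul_assoc, he.eq]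
  have hcompl := LinearMap.IsIdempotentElem.isCompl he_lin
  rw [← LinearMap.span_singleton_eq_range] at hcompl
  exact ⟨R ∙ e, hsup, (isSmallSub_jacobson_bot.mono hinf).comap_subtype_of_isCompl hcompl⟩

end Ring

theorem stmt18 {R : Type*} [Ring R] :
    IsSemiperfectRing R ↔ IsSupplemented R R :=
  ⟨IsSemiperfectRing.isSupplemented, fun hs =>
    ⟨isSemisimpleModule_quotient_of_isSupplemented hs fun _ => le_jacobson_bot_of_isSmallSub,
      fun _ hr => exists_isIdempotentElem_sub_mem_jacobson_of_isSupplemented hs hr⟩⟩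
end
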